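/- arXiv:1304.2122 — 3 statements merged into one kernel-verified Lean document; each statement's English description precedes it below -/
import Mathlib

section
/- Let H be a real separable Hilbert space, (S_t)_{t≥0} a C₀-semigroup on H of growth type α, X₀ ∈ H, T > 0, and z : [0,T] → H Bochner integrable. Define X_t = S_t X₀ + ∫₀ᵗ S_{t−s} z(s) ds for t ∈ [0,T]. Then for every t ∈ [0,T], ‖X_t‖² ≤ e^{2αt} ‖X₀‖² + 2 ∫₀ᵗ e^{2α(t−s)} ⟨X_s, z(s)⟩ ds. (This is the Itô-type inequality for stochastic convolution integrals specialized to an absolutely continuous integrator Z_t = ∫₀ᵗ z(s) ds, which has vanishing quadratic variation.) -/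
open scoped RealInnerProductSpace
open MeasureTheory
open Set Filter

section Aux
variable {H : Type*} [NormedAddCommGroup H] [InnerProductSpace ℝ H]
    [CompleteSpace H] [SecondCountableTopology H]

lemma sg_joint_cont (S : ℝ → H →L[ℝ] H)
    (hScont : ∀ x : H, ContinuousOn (fun t => S t x) (Set.Ici 0))
    (hSb : ∀ t : ℝ, 0 ≤ t → ‖S t‖ ≤ 1) :
    Continuous (fun p : ℝ × H => S (max p.1 0) p.2) := by
  have hS1 : ∀ (u : ℝ) (y : H), ‖S (max u 0) y‖ ≤ ‖y‖ := by
    intro u y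
    calc ‖S (max u 0) y‖ ≤ ‖S (max u 0)‖ * ‖y‖ := (S _).le_opNorm y
    _ ≤ 1 * ‖y‖ := by
        apply mul_le_mul_of_nonneg_right (hSb _ (le_max_right _ _)) (norm_nonneg _)
    _ = ‖y‖ := one_mul _
  rw [continuous_iff_continuousAt]
  rintro ⟨u₀, y₀⟩
  have hg : Continuous (fun u : ℝ => S (max u 0) y₀) :=
    (hScont y₀).comp_continuous (continuous_id.max continuous_const)
      (fun u => Set.mem_Ici.mpr (le_max_right _ _))
  rw [ContinuousAt, tendsto_iff_norm_sub_tendsto_zero]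
  have hb : ∀ p : ℝ × H, ‖S (max p.1 0) p.2 - S (max u₀ 0) y₀‖ ≤
      ‖p.2 - y₀‖ + ‖S (max p.1 0) y₀ - S (max u₀ 0) y₀‖ := by
    intro p
    have : S (max p.1 0) p.2 - S (max u₀ 0) y₀ =
        S (max p.1 0) (p.2 - y₀) + (S (max p.1 0) y₀ - S (max u₀ 0) y₀) := by
      rw [map_sub]; abel
    rw [this]
    exact (norm_add_le _ _).trans (add_le_add (hS1 _ _) le_rfl)
  apply squeeze_zero (fun p => norm_nonneg _) hb
  have h1 : Tendsto (fun p : ℝ × H => ‖p.2 - y₀‖) (nhds (u₀, y₀)) (nhds 0) := by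
    have : Tendsto (fun p : ℝ × H => p.2 - y₀) (nhds (u₀, y₀)) (nhds (y₀ - y₀)) :=
      (continuous_snd.tendsto _).sub tendsto_const_nhds
    simpa using this.norm
  have h2 : Tendsto (fun p : ℝ × H => ‖S (max p.1 0) y₀ - S (max u₀ 0) y₀‖)
      (nhds (u₀, y₀)) (nhds 0) := by
    have : Tendsto (fun p : ℝ × H => S (max p.1 0) y₀ - S (max u₀ 0) y₀)
        (nhds (u₀, y₀)) (nhds (S (max u₀ 0) y₀ - S (max u₀ 0) y₀)) :=
      ((hg.tendsto u₀).comp (continuous_fst.tendsto _)).sub tendsto_const_nhds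
    simpa using this.norm
  simpa using h1.add h2

end Aux
open MeasureTheory Set Filter

section Aux
variable {H : Type*} [NormedAddCommGroup H] [InnerProductSpace ℝ H]
    [CompleteSpace H] [SecondCountableTopology H]

set_option maxHeartbeats 2000000 in
theorem key (S : ℝ → H →L[ℝ] H)
    (hS0 : S 0 = ContinuousLinearMap.id ℝ H)
    (hSsem : ∀ s t : ℝ, 0 ≤ s → 0 ≤ t → S (s + t) = (S s).comp (S t))
    (hScont : ∀ x : H, ContinuousOn (fun t => S t x) (Set.Ici 0))
    (hSb : ∀ t : ℝ, 0 ≤ t → ‖S t‖ ≤ 1)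
    (X₀ : H) (T : ℝ) (hT : 0 < T) (z : ℝ → H)
    (hz : IntegrableOn z (Set.Icc 0 T))
    (X : ℝ → H)
    (hX : ∀ t ∈ Set.Icc (0 : ℝ) T, X t = S t X₀ + ∫ s in (0 : ℝ)..t, S (t - s) (z s)) :
    ∀ t ∈ Set.Icc (0 : ℝ) T,
      ‖X t‖ ^ 2 ≤ ‖X₀‖ ^ 2 + 2 * ∫ s in (0 : ℝ)..t, ⟪X s, z s⟫ := by
  -- basic facts
  have hS1 : ∀ (u : ℝ), 0 ≤ u → ∀ (y : H), ‖S u y‖ ≤ ‖y‖ := by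
    intro u hu y
    calc ‖S u y‖ ≤ ‖S u‖ * ‖y‖ := (S u).le_opNorm y
    _ ≤ 1 * ‖y‖ := mul_le_mul_of_nonneg_right (hSb u hu) (norm_nonneg _)
    _ = ‖y‖ := one_mul _
  have hJC : Continuous (fun p : ℝ × H => S (max p.1 0) p.2) := sg_joint_cont S hScont hSb
  have hzae : AEStronglyMeasurable z (volume.restrict (Icc (0:ℝ) T)) := hz.aestronglyMeasurable
  have hznorm : IntegrableOn (fun r => ‖z r‖) (Icc (0:ℝ) T) := hz.norm
  -- integrability of shifted kernels
  have hker : ∀ g : ℝ → ℝ, Measurable g →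
      IntegrableOn (fun r => S (max (g r) 0) (z r)) (Icc (0:ℝ) T) := by
    intro g hg
    have hm : AEStronglyMeasurable (fun r => S (max (g r) 0) (z r))
        (volume.restrict (Icc (0:ℝ) T)) := by
      have hpair : AEStronglyMeasurable (fun r => (g r, z r))
          (volume.restrict (Icc (0:ℝ) T)) :=
        (hg.aemeasurable.aestronglyMeasurable).prodMk hzae
      exact hJC.comp_aestronglyMeasurable hpair
    exact Integrable.mono' hznorm hm
      (Filter.Eventually.of_forall (fun r => hS1 _ (le_max_right _ _) _))
  have hkerI : ∀ c a b : ℝ, 0 ≤ a → a ≤ b → b ≤ T →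
      IntervalIntegrable (fun r => S (max (c - r) 0) (z r)) volume a b := by
    intro c a b ha hab hb
    have := (hker (fun r => c - r) (measurable_const.sub measurable_id)).mono_set
      (by rw [Set.uIcc_of_le hab]; exact Set.Icc_subset_Icc ha hb :
        Set.uIcc a b ⊆ Icc (0:ℝ) T)
    exact this.intervalIntegrable
  have hzI : ∀ a b : ℝ, 0 ≤ a → a ≤ b → b ≤ T →
      IntervalIntegrable (fun r => ‖z r‖) volume a b := by
    intro a b ha hab hb
    exact (hznorm.mono_set
      (by rw [Set.uIcc_of_le hab]; exact Set.Icc_subset_Icc ha hb)).intervalIntegrable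
  -- formula with max
  have hX' : ∀ t ∈ Set.Icc (0:ℝ) T,
      X t = S t X₀ + ∫ s in (0:ℝ)..t, S (max (t - s) 0) (z s) := by
    intro t ht
    rw [hX t ht]
    congr 1
    apply intervalIntegral.integral_congr
    intro s hs
    rw [Set.uIcc_of_le ht.1] at hs
    show S (t - s) (z s) = S (max (t - s) 0) (z s)
    rw [max_eq_left (by linarith [hs.1, hs.2])]
  have hX0 : X 0 = X₀ := by
    rw [hX' 0 ⟨le_rfl, hT.le⟩, intervalIntegral.integral_same, hS0]
    simp
  -- primitive of ‖z‖
  set Z : ℝ → ℝ := fun u => ∫ r in (0:ℝ)..u, ‖z r‖ with hZdef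
  have hZadd : ∀ a b : ℝ, 0 ≤ a → a ≤ b → b ≤ T →
      Z b - Z a = ∫ r in a..b, ‖z r‖ := by
    intro a b ha hab hb
    have := intervalIntegral.integral_add_adjacent_intervals
      (hzI 0 a le_rfl ha (hab.trans hb)) (hzI a b ha hab hb)
    simp only [hZdef]
    linarith [this]
  have hZmono : ∀ a b : ℝ, 0 ≤ a → a ≤ b → b ≤ T → Z a ≤ Z b := by
    intro a b ha hab hb
    have h1 := hZadd a b ha hab hb
    have h2 : 0 ≤ ∫ r in a..b, ‖z r‖ :=
      intervalIntegral.integral_nonneg hab (fun r _ => norm_nonneg _)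
    linarith
  have hZ0 : Z 0 = 0 := intervalIntegral.integral_same
  have hZT : 0 ≤ Z T := hZ0 ▸ hZmono 0 T le_rfl hT.le le_rfl
  have hZcont : ContinuousOn Z (Icc (0:ℝ) T) := by
    have := intervalIntegral.continuousOn_primitive_interval
      (a := (0:ℝ)) (b := T) (μ := volume) (f := fun r => ‖z r‖)
      (by rwa [Set.uIcc_of_le hT.le])
    rwa [Set.uIcc_of_le hT.le] at this
  -- shift identity
  have hshift : ∀ a b : ℝ, 0 ≤ a → a ≤ b → b ≤ T →
      X b = S (b - a) (X a) + ∫ r in a..b, S (max (b - r) 0) (z r) := by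
    intro a b ha hab hbT
    have e1 : S (b - a) (S a X₀) = S b X₀ := by
      have h := hSsem (b - a) a (by linarith) ha
      rw [sub_add_cancel] at h
      rw [h]; rfl
    have e2 : S (b - a) (∫ r in (0:ℝ)..a, S (max (a - r) 0) (z r)) =
        ∫ r in (0:ℝ)..a, S (max (b - r) 0) (z r) := by
      rw [← ContinuousLinearMap.intervalIntegral_comp_comm _
        (hkerI a 0 a le_rfl ha (hab.trans hbT))]
      apply intervalIntegral.integral_congr
      intro r hr
      rw [Set.uIcc_of_le ha] at hr
      have h3 : max (a - r) 0 = a - r := max_eq_left (by linarith [hr.1, hr.2])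
      have h4 : max (b - r) 0 = b - r := max_eq_left (by linarith [hr.2])
      simp only [ContinuousLinearMap.coe_comp', Function.comp_apply, h3, h4]
      have h := hSsem (b - a) (a - r) (by linarith) (by linarith [hr.2])
      have heq : b - a + (a - r) = b - r := by ring
      rw [heq] at h
      rw [h]; rfl
    rw [hX' b ⟨ha.trans hab, hbT⟩, hX' a ⟨ha, hab.trans hbT⟩, map_add, e1, e2, add_assoc,
      intervalIntegral.integral_add_adjacent_intervals
        (hkerI b 0 a le_rfl ha (hab.trans hbT)) (hkerI b a b ha hab hbT)]
  -- bound on X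
  have hXbound : ∀ r ∈ Set.Icc (0:ℝ) T, ‖X r‖ ≤ ‖X₀‖ + Z T := by
    intro r hr
    rw [hX' r hr]
    calc ‖S r X₀ + ∫ s in (0:ℝ)..r, S (max (r - s) 0) (z s)‖
        ≤ ‖S r X₀‖ + ‖∫ s in (0:ℝ)..r, S (max (r - s) 0) (z s)‖ := norm_add_le _ _
    _ ≤ ‖X₀‖ + Z T := by
        apply add_le_add (hS1 r hr.1 X₀)
        calc ‖∫ s in (0:ℝ)..r, S (max (r - s) 0) (z s)‖
            ≤ ∫ s in (0:ℝ)..r, ‖S (max (r - s) 0) (z s)‖ :=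
              intervalIntegral.norm_integral_le_integral_norm hr.1
        _ ≤ ∫ s in (0:ℝ)..r, ‖z s‖ := by
              apply intervalIntegral.integral_mono_on hr.1
                ((hkerI r 0 r le_rfl hr.1 hr.2).norm) (hzI 0 r le_rfl hr.1 hr.2)
              intro s _
              exact hS1 _ (le_max_right _ _) _
        _ = Z r := rfl
        _ ≤ Z T := hZmono r T hr.1 hr.2 le_rfl
  -- continuity of X
  have hXcont : ContinuousOn X (Icc (0:ℝ) T) := by
    set F : ℝ → ℝ → H := fun t ρ =>
      Set.indicator (Iic t) (fun ρ => S (max (t - ρ) 0) (z ρ)) ρ with hFdef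
    have hrep : ∀ t ∈ Set.Icc (0:ℝ) T,
        X t = S t X₀ + ∫ ρ in Ioc (0:ℝ) T, F t ρ := by
      intro t ht
      rw [hX' t ht]
      congr 1
      rw [intervalIntegral.integral_of_le ht.1, hFdef]
      rw [MeasureTheory.setIntegral_indicator measurableSet_Iic]
      congr 1
      rw [Set.Ioc_inter_Iic, min_eq_right ht.2]
    have hzae' : AEStronglyMeasurable z (volume.restrict (Ioc (0:ℝ) T)) :=
      hzae.mono_measure (Measure.restrict_mono Set.Ioc_subset_Icc_self le_rfl)
    have hC : ContinuousOn (fun t => ∫ ρ in Ioc (0:ℝ) T, F t ρ) (Icc (0:ℝ) T) := by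
      intro t₀ ht₀
      apply tendsto_integral_filter_of_dominated_convergence
        (bound := fun ρ => ‖z ρ‖)
      · apply Filter.Eventually.of_forall
        intro t
        apply AEStronglyMeasurable.indicator _ measurableSet_Iic
        exact hJC.comp_aestronglyMeasurable
          (((measurable_const.sub measurable_id).aemeasurable.aestronglyMeasurable).prodMk hzae')
      · apply Filter.Eventually.of_forall
        intro t
        apply Filter.Eventually.of_forall
        intro ρ
        refine (norm_indicator_le_norm_self _ _).trans ?_
        exact hS1 _ (le_max_right _ _) _
      · exact hznorm.mono_set Set.Ioc_subset_Icc_self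
      · have h0 : ∀ᵐ ρ : ℝ, ρ ≠ t₀ := by
          rw [MeasureTheory.ae_iff]
          have : {ρ : ℝ | ¬ρ ≠ t₀} = {t₀} := by ext ρ; simp
          rw [this]
          exact measure_singleton t₀
        filter_upwards [ae_restrict_of_ae h0] with ρ hρ
        rcases lt_or_gt_of_ne hρ with hlt | hgt
        · have hev : ∀ᶠ t in nhdsWithin t₀ (Icc (0:ℝ) T),
              F t ρ = S (max (t - ρ) 0) (z ρ) := by
            filter_upwards [eventually_nhdsWithin_of_eventually_nhds
              (eventually_gt_nhds hlt)] with t htρ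
            exact Set.indicator_of_mem (Set.mem_Iic.mpr (le_of_lt htρ)) _
          rw [tendsto_congr' hev]
          have hF0 : F t₀ ρ = S (max (t₀ - ρ) 0) (z ρ) :=
            Set.indicator_of_mem (Set.mem_Iic.mpr (le_of_lt hlt)) _
          rw [hF0]
          have hcont : Continuous (fun t : ℝ => S (max (t - ρ) 0) (z ρ)) :=
            hJC.comp ((continuous_id.sub continuous_const).prodMk continuous_const)
          exact (hcont.tendsto t₀).mono_left nhdsWithin_le_nhds
        · have hev : ∀ᶠ t in nhdsWithin t₀ (Icc (0:ℝ) T), F t ρ = 0 := by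
            filter_upwards [eventually_nhdsWithin_of_eventually_nhds
              (eventually_lt_nhds hgt)] with t htρ
            exact Set.indicator_of_notMem (by simpa using not_le.mpr htρ) _
          rw [tendsto_congr' hev]
          have hF0 : F t₀ ρ = 0 := Set.indicator_of_notMem (by simpa using not_le.mpr hgt) _
          rw [hF0]
          exact tendsto_const_nhds
    have hSX : ContinuousOn (fun t => S t X₀ + ∫ ρ in Ioc (0:ℝ) T, F t ρ) (Icc (0:ℝ) T) :=
      ((hScont X₀).mono (fun x hx => hx.1)).add hC
    exact (hSX.congr hrep)
  set B : ℝ := ‖X₀‖ + Z T with hBdef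
  have hB0 : 0 ≤ B := add_nonneg (norm_nonneg _) hZT
  have hXB : ∀ r ∈ Set.Icc (0:ℝ) T, ‖X r‖ ≤ B := hXbound
  have hXaesm : AEStronglyMeasurable X (volume.restrict (Icc (0:ℝ) T)) :=
    hXcont.aestronglyMeasurable measurableSet_Icc
  -- integrability of the inner product integrand
  have hXz_int : IntegrableOn (fun r => ⟪X r, z r⟫) (Icc (0:ℝ) T) := by
    have hm : AEStronglyMeasurable (fun r => ⟪X r, z r⟫)
        (volume.restrict (Icc (0:ℝ) T)) := by
      exact (continuous_inner.comp_aestronglyMeasurable (hXaesm.prodMk hzae))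
    apply Integrable.mono' (hznorm.const_mul B) hm
    filter_upwards [MeasureTheory.ae_restrict_mem measurableSet_Icc] with r hr
    calc ‖⟪X r, z r⟫‖ ≤ ‖X r‖ * ‖z r‖ := by
          rw [Real.norm_eq_abs]; exact abs_real_inner_le_norm _ _
    _ ≤ B * ‖z r‖ := mul_le_mul_of_nonneg_right (hXB r hr) (norm_nonneg _)
  -- main argument
  intro t ht
  rcases eq_or_lt_of_le ht.1 with heq | h0
  · rw [← heq]
    simp [hX0]
  have htT := ht.2
  have ht0 := ht.1
  -- partition data
  set δ : ℕ → ℝ := fun n => t / (n + 1) with hδdef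
  have hδpos : ∀ n : ℕ, 0 < δ n := fun n => div_pos h0 (by positivity)
  have hδt : ∀ n : ℕ, ((n : ℝ) + 1) * δ n = t := by
    intro n
    rw [hδdef]
    field_simp
  have hδ0 : Tendsto δ atTop (nhds 0) := by
    rw [hδdef]
    exact_mod_cast tendsto_const_div_atTop_nhds_zero_nat t |>.comp (tendsto_add_atTop_nat 1)
  have hfl : ∀ (n k : ℕ) (r : ℝ), (k : ℝ) * δ n ≤ r → r < ((k : ℝ) + 1) * δ n →
      ⌊r / δ n⌋ = (k : ℤ) := by
    intro n k r h1 h2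
    have hδ := hδpos n
    rw [Int.floor_eq_iff]
    constructor
    · push_cast
      rw [le_div_iff₀ hδ]
      linarith
    · push_cast
      rw [div_lt_iff₀ hδ]
      linarith
  have hflmem : ∀ (n : ℕ) (r : ℝ), 0 ≤ r → r < t → ∃ k : ℕ, k ≤ n ∧ ⌊r / δ n⌋ = (k : ℤ) ∧
      (k : ℝ) * δ n ≤ r ∧ r < ((k : ℝ) + 1) * δ n := by
    intro n r hr0 hrt
    have hδ := hδpos n
    have hnneg : 0 ≤ ⌊r / δ n⌋ := Int.floor_nonneg.mpr (div_nonneg hr0 hδ.le)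
    refine ⟨⌊r / δ n⌋.toNat, ?_, ?_, ?_, ?_⟩
    · have : ⌊r / δ n⌋ < (n : ℤ) + 1 := by
        rw [Int.floor_lt]
        push_cast
        rw [div_lt_iff₀ hδ]
        calc r < t := hrt
        _ = ((n : ℝ) + 1) * δ n := (hδt n).symm
      omega
    · rw [Int.toNat_of_nonneg hnneg]
    · have h1 := Int.floor_le (r / δ n)
      have : (⌊r / δ n⌋.toNat : ℝ) = ((⌊r / δ n⌋ : ℤ) : ℝ) := by
        exact_mod_cast congrArg (Int.cast : ℤ → ℝ) (Int.toNat_of_nonneg hnneg)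
      rw [this]
      calc ((⌊r / δ n⌋ : ℤ) : ℝ) * δ n ≤ (r / δ n) * δ n :=
            mul_le_mul_of_nonneg_right h1 hδ.le
      _ = r := by field_simp
    · have h1 := Int.lt_floor_add_one (r / δ n)
      have hc : (⌊r / δ n⌋.toNat : ℝ) = ((⌊r / δ n⌋ : ℤ) : ℝ) := by
        exact_mod_cast congrArg (Int.cast : ℤ → ℝ) (Int.toNat_of_nonneg hnneg)
      rw [hc]
      calc r = (r / δ n) * δ n := by field_simp
      _ < (((⌊r / δ n⌋ : ℤ) : ℝ) + 1) * δ n := by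
            apply mul_lt_mul_of_pos_right _ hδ
            exact_mod_cast h1
  have hflm : ∀ n, Measurable fun r : ℝ => ⌊r / δ n⌋ :=
    fun n => Int.measurable_floor.comp (measurable_id.div_const _)
  -- the error function
  set E : ℕ → ℝ → ℝ := fun n r =>
    2 * (‖z r‖ * ‖S (max (((⌊r / δ n⌋ : ℝ) + 1) * δ n - r) 0) (X r) - X r‖) +
    2 * (B * ‖S (max (((⌊r / δ n⌋ : ℝ) + 1) * δ n - r) 0) (z r) - z r‖) +
    3 * ((Z (((⌊r / δ n⌋ : ℝ) + 1) * δ n) - Z ((⌊r / δ n⌋ : ℝ) * δ n)) * ‖z r‖) with hEdef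
  have hIccsub : Icc (0:ℝ) t ⊆ Icc (0:ℝ) T := Set.Icc_subset_Icc le_rfl htT
  have hXae2 : AEStronglyMeasurable X (volume.restrict (Icc (0:ℝ) t)) :=
    hXaesm.mono_measure (Measure.restrict_mono hIccsub le_rfl)
  have hzae2 : AEStronglyMeasurable z (volume.restrict (Icc (0:ℝ) t)) :=
    hzae.mono_measure (Measure.restrict_mono hIccsub le_rfl)
  have hEaesm : ∀ n, AEStronglyMeasurable (E n) (volume.restrict (Icc (0:ℝ) t)) := by
    intro n
    have hgm : Measurable fun r : ℝ => ((⌊r / δ n⌋ : ℝ) + 1) * δ n - r := by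
      have h1 : Measurable fun r : ℝ => ((⌊r / δ n⌋ : ℝ) + 1) * δ n :=
        (measurable_from_top (f := fun i : ℤ => ((i : ℝ) + 1) * δ n)).comp (hflm n)
      exact h1.sub measurable_id
    have hZm1 : Measurable fun r : ℝ => Z (((⌊r / δ n⌋ : ℝ) + 1) * δ n) :=
      (measurable_from_top (f := fun i : ℤ => Z (((i : ℝ) + 1) * δ n))).comp (hflm n)
    have hZm2 : Measurable fun r : ℝ => Z ((⌊r / δ n⌋ : ℝ) * δ n) :=
      (measurable_from_top (f := fun i : ℤ => Z ((i : ℝ) * δ n))).comp (hflm n)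
    have hA : AEStronglyMeasurable
        (fun r => S (max (((⌊r / δ n⌋ : ℝ) + 1) * δ n - r) 0) (X r))
        (volume.restrict (Icc (0:ℝ) t)) :=
      hJC.comp_aestronglyMeasurable
        ((hgm.aemeasurable.aestronglyMeasurable).prodMk hXae2)
    have hBz : AEStronglyMeasurable
        (fun r => S (max (((⌊r / δ n⌋ : ℝ) + 1) * δ n - r) 0) (z r))
        (volume.restrict (Icc (0:ℝ) t)) :=
      hJC.comp_aestronglyMeasurable
        ((hgm.aemeasurable.aestronglyMeasurable).prodMk hzae2)
    exact (((hzae2.norm.mul ((hA.sub hXae2).norm)).const_mul 2).add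
      ((((hBz.sub hzae2).norm.const_mul B).const_mul 2))).add
      ((((hZm1.sub hZm2).aemeasurable.aestronglyMeasurable).mul hzae2.norm).const_mul 3)
  have hrIcoIcc : Icc (0:ℝ) t ⊆ Icc (0:ℝ) T := hIccsub
  have hEbound : ∀ (n : ℕ) (r : ℝ), r ∈ Ico (0:ℝ) t →
      0 ≤ E n r ∧ E n r ≤ (8 * B + 3 * Z T) * ‖z r‖ := by
    intro n r hr
    obtain ⟨k, hkn, hk, h1, h2⟩ := hflmem n r hr.1 hr.2
    have hrT : r ∈ Icc (0:ℝ) T := ⟨hr.1, (hr.2.le).trans htT⟩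
    have hub : ((k : ℝ) + 1) * δ n ≤ t := by
      rw [← hδt n]
      apply mul_le_mul_of_nonneg_right _ (hδpos n).le
      have : (k : ℝ) ≤ (n : ℝ) := by exact_mod_cast hkn
      linarith
    have hlb : 0 ≤ (k : ℝ) * δ n := by positivity
    have hZle : Z (((k:ℝ)) * δ n) ≤ Z (((k:ℝ) + 1) * δ n) :=
      hZmono _ _ hlb (by nlinarith [(hδpos n).le]) (hub.trans htT)
    have hZub : Z (((k:ℝ) + 1) * δ n) ≤ Z T :=
      hZmono _ _ (by positivity) (hub.trans htT) le_rfl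
    have hZlb : 0 ≤ Z ((k:ℝ) * δ n) := hZ0 ▸ hZmono 0 _ le_rfl hlb (by linarith [hub, htT])
    set w : ℝ := max (((k:ℝ) + 1) * δ n - r) 0 with hwdef
    have hsx : ‖S w (X r) - X r‖ ≤ 2 * B := by
      refine (norm_sub_le _ _).trans ?_
      have h := hS1 w (le_max_right _ _) (X r)
      have hx := hXB r hrT
      linarith
    have hsz : ‖S w (z r) - z r‖ ≤ 2 * ‖z r‖ := by
      refine (norm_sub_le _ _).trans ?_
      have h := hS1 w (le_max_right _ _) (z r)
      linarith
    have hEeq : E n r =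
        2 * (‖z r‖ * ‖S w (X r) - X r‖) + 2 * (B * ‖S w (z r) - z r‖) +
        3 * ((Z (((k:ℝ) + 1) * δ n) - Z ((k:ℝ) * δ n)) * ‖z r‖) := by
      rw [hEdef]
      simp only [hk, Int.cast_natCast, hwdef]
    rw [hEeq]
    constructor
    · have t1 : 0 ≤ ‖z r‖ * ‖S w (X r) - X r‖ := mul_nonneg (norm_nonneg _) (norm_nonneg _)
      have t2 : 0 ≤ B * ‖S w (z r) - z r‖ := mul_nonneg hB0 (norm_nonneg _)
      have t3 : 0 ≤ (Z (((k:ℝ) + 1) * δ n) - Z ((k:ℝ) * δ n)) * ‖z r‖ :=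
        mul_nonneg (by linarith) (norm_nonneg _)
      linarith
    · have m1 : ‖z r‖ * ‖S w (X r) - X r‖ ≤ ‖z r‖ * (2 * B) :=
        mul_le_mul_of_nonneg_left hsx (norm_nonneg _)
      have m2 : B * ‖S w (z r) - z r‖ ≤ B * (2 * ‖z r‖) :=
        mul_le_mul_of_nonneg_left hsz hB0
      have m3 : (Z (((k:ℝ) + 1) * δ n) - Z ((k:ℝ) * δ n)) * ‖z r‖ ≤ Z T * ‖z r‖ :=
        mul_le_mul_of_nonneg_right (by linarith) (norm_nonneg _)
      nlinarith [norm_nonneg (z r), hB0, hZT]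
  have haeIco : ∀ᵐ r ∂volume.restrict (Icc (0:ℝ) t), r ∈ Ico (0:ℝ) t := by
    have hrw : volume.restrict (Icc (0:ℝ) t) = volume.restrict (Ico (0:ℝ) t) :=
      (Measure.restrict_congr_set Ico_ae_eq_Icc).symm
    rw [hrw]
    exact ae_restrict_mem measurableSet_Ico
  have hEint : ∀ n, IntegrableOn (E n) (Icc (0:ℝ) t) := by
    intro n
    apply Integrable.mono'
      ((hznorm.mono_set hIccsub).const_mul (8 * B + 3 * Z T)) (hEaesm n)
    filter_upwards [haeIco] with r hr
    rw [Real.norm_eq_abs, abs_of_nonneg (hEbound n r hr).1]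
    exact (hEbound n r hr).2
  -- per-interval step
  have hstep : ∀ n k : ℕ, k ≤ n →
      ‖X (((k:ℝ) + 1) * δ n)‖^2 - ‖X ((k:ℝ) * δ n)‖^2 ≤
        ∫ r in ((k:ℝ) * δ n)..(((k:ℝ) + 1) * δ n), (2 * ⟪X r, z r⟫ + E n r) := by
    intro n k hkn
    have hδ := hδpos n
    set a : ℝ := (k:ℝ) * δ n with hadef
    set b : ℝ := ((k:ℝ) + 1) * δ n with hbdef
    have ha0 : 0 ≤ a := by positivity
    have hab : a ≤ b := by nlinarith
    have hbt : b ≤ t := by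
      rw [hbdef, ← hδt n]
      have : (k:ℝ) ≤ (n:ℝ) := by exact_mod_cast hkn
      nlinarith
    have hbT : b ≤ T := hbt.trans htT
    have hId := hshift a b ha0 hab hbT
    set I : H := ∫ r in a..b, S (max (b - r) 0) (z r) with hIdef
    have hexp : ‖X b‖^2 = ‖S (b-a) (X a)‖^2 + 2 * ⟪S (b-a) (X a), I⟫ + ‖I‖^2 := by
      rw [hId]; exact norm_add_sq_real _ _
    have hc1 : ‖S (b-a) (X a)‖^2 ≤ ‖X a‖^2 :=
      pow_le_pow_left₀ (norm_nonneg _) (hS1 (b-a) (by linarith) (X a)) 2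
    have hcross := ContinuousLinearMap.intervalIntegral_comp_comm
      (innerSL ℝ (S (b-a) (X a))) (hkerI b a b ha0 hab hbT)
    simp only [innerSL_apply_apply] at hcross
    -- hcross : ∫ r in a..b, ⟪S (b-a) (X a), S (max (b-r) 0) (z r)⟫ = ⟪S (b-a) (X a), I⟫
    have hIb : ‖I‖ ≤ Z b - Z a := by
      rw [hZadd a b ha0 hab hbT, hIdef]
      calc ‖∫ r in a..b, S (max (b-r) 0) (z r)‖
          ≤ ∫ r in a..b, ‖S (max (b-r) 0) (z r)‖ :=
            intervalIntegral.norm_integral_le_integral_norm hab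
      _ ≤ ∫ r in a..b, ‖z r‖ :=
            intervalIntegral.integral_mono_on hab (hkerI b a b ha0 hab hbT).norm
              (hzI a b ha0 hab hbT) (fun r _ => hS1 _ (le_max_right _ _) _)
    have hZba : 0 ≤ Z b - Z a := by linarith [hZmono a b ha0 hab hbT]
    have hI2 : ‖I‖^2 ≤ (Z b - Z a) * (Z b - Z a) := by
      have := pow_le_pow_left₀ (norm_nonneg _) hIb 2
      nlinarith [this]
    have hZconst : (Z b - Z a) * (Z b - Z a) = ∫ r in a..b, (Z b - Z a) * ‖z r‖ := by
      rw [intervalIntegral.integral_const_mul, ← hZadd a b ha0 hab hbT]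
    -- integrability of pieces
    have gInner : IntervalIntegrable
        (fun r => ⟪S (b-a) (X a), S (max (b-r) 0) (z r)⟫) volume a b := by
      have h1 : IntegrableOn (fun r => S (max (b - r) 0) (z r)) (Icc (0:ℝ) T) :=
        hker (fun r => b - r) (measurable_const.sub measurable_id)
      have h2 := (innerSL ℝ (S (b-a) (X a))).integrable_comp h1
      simp only [innerSL_apply_apply] at h2
      have h2' : IntegrableOn (fun r => ⟪S (b-a) (X a), S (max (b-r) 0) (z r)⟫)
          (Icc (0:ℝ) T) := h2
      have h3 : IntegrableOn (fun r => ⟪S (b-a) (X a), S (max (b-r) 0) (z r)⟫)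
          (Set.uIcc a b) := by
        rw [Set.uIcc_of_le hab]
        exact h2'.mono_set (Set.Icc_subset_Icc ha0 hbT)
      exact h3.intervalIntegrable
    have gLHS : IntervalIntegrable
        (fun r => 2 * ⟪S (b-a) (X a), S (max (b-r) 0) (z r)⟫ + (Z b - Z a) * ‖z r‖)
        volume a b :=
      (gInner.const_mul 2).add ((hzI a b ha0 hab hbT).const_mul _)
    have gRHS : IntervalIntegrable (fun r => 2 * ⟪X r, z r⟫ + E n r) volume a b := by
      have h1 : IntegrableOn (fun r => 2 * ⟪X r, z r⟫ + E n r) (Icc (0:ℝ) t) :=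
        ((hXz_int.mono_set hIccsub).const_mul 2).add (hEint n)
      have h3 : IntegrableOn (fun r => 2 * ⟪X r, z r⟫ + E n r) (Set.uIcc a b) := by
        rw [Set.uIcc_of_le hab]
        exact h1.mono_set (Set.Icc_subset_Icc ha0 hbt)
      exact h3.intervalIntegrable
    -- pointwise inequality a.e.
    have hae : ∀ᵐ r ∂volume.restrict (Icc a b), r ∈ Ioo a b := by
      have hrw : volume.restrict (Icc a b) = volume.restrict (Ioo a b) :=
        (Measure.restrict_congr_set Ioo_ae_eq_Icc).symm
      rw [hrw]
      exact ae_restrict_mem measurableSet_Ioo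
    have hptwise : ∀ᵐ r ∂volume.restrict (Icc a b),
        2 * ⟪S (b-a) (X a), S (max (b-r) 0) (z r)⟫ + (Z b - Z a) * ‖z r‖ ≤
          2 * ⟪X r, z r⟫ + E n r := by
      filter_upwards [hae] with r hr
      have hra : a ≤ r := hr.1.le
      have hrb : r ≤ b := hr.2.le
      have hr0 : 0 ≤ r := ha0.trans hra
      have hrT : r ∈ Set.Icc (0:ℝ) T := ⟨hr0, hrb.trans hbT⟩
      have hk2 : ⌊r / δ n⌋ = (k:ℤ) := hfl n k r hra hr.2
      have hEeq : E n r =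
          2 * (‖z r‖ * ‖S (max (b - r) 0) (X r) - X r‖) +
          2 * (B * ‖S (max (b - r) 0) (z r) - z r‖) +
          3 * ((Z b - Z a) * ‖z r‖) := by
        rw [hEdef]
        simp only [hk2, Int.cast_natCast]
        rfl
      rw [hEeq]
      have hmaxbr : max (b - r) 0 = b - r := max_eq_left (by linarith)
      rw [hmaxbr]
      set u : H := X r
      set v : H := z r
      set A : H := S (b-r) (X r) with hAdef
      set C : H := S (b-r) (z r) with hCdef
      -- decomposition of X r
      have hXr := hshift a r ha0 hra (hrb.trans hbT)
      set J : H := ∫ ρ in a..r, S (max (r - ρ) 0) (z ρ) with hJdef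
      have hJb : ‖J‖ ≤ Z r - Z a := by
        rw [hZadd a r ha0 hra (hrb.trans hbT), hJdef]
        calc ‖∫ ρ in a..r, S (max (r - ρ) 0) (z ρ)‖
            ≤ ∫ ρ in a..r, ‖S (max (r - ρ) 0) (z ρ)‖ :=
              intervalIntegral.norm_integral_le_integral_norm hra
        _ ≤ ∫ ρ in a..r, ‖z ρ‖ :=
              intervalIntegral.integral_mono_on hra
                (hkerI r a r ha0 hra (hrb.trans hbT)).norm
                (hzI a r ha0 hra (hrb.trans hbT)) (fun ρ _ => hS1 _ (le_max_right _ _) _)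
      have hJZ : ‖J‖ ≤ Z b - Z a := by
        have := hZmono r b hr0 hrb hbT
        linarith
      have hsg : S (b-a) (X a) = S (b-r) (S (r-a) (X a)) := by
        have h := hSsem (b-r) (r-a) (by linarith) (by linarith)
        rw [show b - r + (r - a) = b - a by ring] at h
        rw [h]; rfl
      have hXra : S (r-a) (X a) = X r - J := by
        rw [hXr]; abel
      have hdecomp : ⟪S (b-a) (X a), C⟫ = ⟪A, C⟫ - ⟪S (b-r) J, C⟫ := by
        rw [hsg, hXra, map_sub, inner_sub_left]
      have hACuv : ⟪A - u, C⟫ + ⟪u, C - v⟫ = ⟪A, C⟫ - ⟪u, v⟫ := by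
        rw [inner_sub_left, inner_sub_right]; ring
      have hCv : ‖C‖ ≤ ‖v‖ := hS1 (b-r) (by linarith) v
      have c1 : ⟪A - u, C⟫ ≤ ‖v‖ * ‖A - u‖ := by
        calc ⟪A - u, C⟫ ≤ ‖A - u‖ * ‖C‖ := real_inner_le_norm _ _
        _ ≤ ‖A - u‖ * ‖v‖ := mul_le_mul_of_nonneg_left hCv (norm_nonneg _)
        _ = ‖v‖ * ‖A - u‖ := mul_comm _ _
      have c2 : ⟪u, C - v⟫ ≤ B * ‖C - v‖ := by
        calc ⟪u, C - v⟫ ≤ ‖u‖ * ‖C - v‖ := real_inner_le_norm _ _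
        _ ≤ B * ‖C - v‖ := mul_le_mul_of_nonneg_right (hXB r hrT) (norm_nonneg _)
      have c3 : -⟪S (b-r) J, C⟫ ≤ (Z b - Z a) * ‖v‖ := by
        have habs : |⟪S (b-r) J, C⟫| ≤ ‖S (b-r) J‖ * ‖C‖ := abs_real_inner_le_norm _ _
        have hSJ : ‖S (b-r) J‖ ≤ Z b - Z a := (hS1 (b-r) (by linarith) J).trans hJZ
        have : ‖S (b-r) J‖ * ‖C‖ ≤ (Z b - Z a) * ‖v‖ :=
          mul_le_mul hSJ hCv (norm_nonneg _) hZba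
        linarith [neg_abs_le ⟪S (b-r) J, C⟫]
      linarith [hdecomp, hACuv, c1, c2, c3]
    -- assemble
    have hmono := intervalIntegral.integral_mono_ae_restrict hab gLHS gRHS hptwise
    have hsplit : ∫ r in a..b,
        (2 * ⟪S (b-a) (X a), S (max (b-r) 0) (z r)⟫ + (Z b - Z a) * ‖z r‖) =
        2 * ⟪S (b-a) (X a), I⟫ + (Z b - Z a) * (Z b - Z a) := by
      rw [intervalIntegral.integral_add (gInner.const_mul 2)
        ((hzI a b ha0 hab hbT).const_mul _), intervalIntegral.integral_const_mul,
        intervalIntegral.integral_const_mul, hcross, ← hZadd a b ha0 hab hbT]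
    rw [hsplit] at hmono
    linarith [hexp, hc1, hI2, hmono]
  -- global integrand integrability on [0,t]
  have hGint : ∀ n, IntegrableOn (fun r => 2 * ⟪X r, z r⟫ + E n r) (Icc (0:ℝ) t) :=
    fun n => ((hXz_int.mono_set hIccsub).const_mul 2).add (hEint n)
  -- telescoping estimate
  have hsum : ∀ n : ℕ, ‖X t‖^2 - ‖X₀‖^2 ≤
      2 * (∫ s in (0:ℝ)..t, ⟪X s, z s⟫) + ∫ r in (0:ℝ)..t, E n r := by
    intro n
    set p : ℕ → ℝ := fun k => (k:ℝ) * δ n with hpdef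
    have hp0 : p 0 = 0 := by simp [hpdef]
    have hpn : p (n+1) = t := by
      rw [hpdef]
      push_cast
      exact hδt n
    have hpk : ∀ k : ℕ, k ≤ n + 1 → 0 ≤ p k ∧ p k ≤ t := by
      intro k hk
      constructor
      · rw [hpdef]
        positivity
      · rw [hpdef, ← hδt n]
        apply mul_le_mul_of_nonneg_right _ (hδpos n).le
        have : (k:ℝ) ≤ (n:ℝ) + 1 := by exact_mod_cast hk
        linarith
    have hpmono : ∀ k : ℕ, p k ≤ p (k+1) := by
      intro k
      rw [hpdef]
      push_cast
      nlinarith [(hδpos n).le]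
    have hGI : ∀ k : ℕ, k < n + 1 → IntervalIntegrable
        (fun r => 2 * ⟪X r, z r⟫ + E n r) volume (p k) (p (k+1)) := by
      intro k hk
      have h3 : IntegrableOn (fun r => 2 * ⟪X r, z r⟫ + E n r)
          (Set.uIcc (p k) (p (k+1))) := by
        rw [Set.uIcc_of_le (hpmono k)]
        exact (hGint n).mono_set
          (Set.Icc_subset_Icc (hpk k (by omega)).1 (hpk (k+1) (by omega)).2)
      exact h3.intervalIntegrable
    have htel : ∑ k ∈ Finset.range (n+1), (‖X (p (k+1))‖^2 - ‖X (p k)‖^2) =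
        ‖X t‖^2 - ‖X₀‖^2 := by
      rw [Finset.sum_range_sub (fun k => ‖X (p k)‖^2), hpn, hp0, hX0]
    have hsumle : ∑ k ∈ Finset.range (n+1), (‖X (p (k+1))‖^2 - ‖X (p k)‖^2) ≤
        ∑ k ∈ Finset.range (n+1), ∫ r in (p k)..(p (k+1)), (2 * ⟪X r, z r⟫ + E n r) := by
      apply Finset.sum_le_sum
      intro k hk
      have hk' : k ≤ n := Nat.lt_succ_iff.mp (Finset.mem_range.mp hk)
      have hcast : p (k+1) = ((k:ℝ) + 1) * δ n := by
        rw [hpdef]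
        push_cast
        ring
      have hcast0 : p k = (k:ℝ) * δ n := by rw [hpdef]
      rw [hcast, hcast0]
      exact hstep n k hk'
    have hadj : ∑ k ∈ Finset.range (n+1), ∫ r in (p k)..(p (k+1)),
        (2 * ⟪X r, z r⟫ + E n r) = ∫ r in (p 0)..(p (n+1)), (2 * ⟪X r, z r⟫ + E n r) :=
      intervalIntegral.sum_integral_adjacent_intervals hGI
    rw [hadj, hp0, hpn] at hsumle
    have hIxz : IntervalIntegrable (fun r => 2 * ⟪X r, z r⟫) volume 0 t := by
      have h3 : IntegrableOn (fun r => 2 * ⟪X r, z r⟫) (Set.uIcc 0 t) := by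
        rw [Set.uIcc_of_le ht0]
        exact (hXz_int.mono_set hIccsub).const_mul 2
      exact h3.intervalIntegrable
    have hIE : IntervalIntegrable (E n) volume 0 t := by
      have h3 : IntegrableOn (E n) (Set.uIcc 0 t) := by
        rw [Set.uIcc_of_le ht0]
        exact hEint n
      exact h3.intervalIntegrable
    have hsplit2 : ∫ r in (0:ℝ)..t, (2 * ⟪X r, z r⟫ + E n r) =
        2 * (∫ s in (0:ℝ)..t, ⟪X s, z s⟫) + ∫ r in (0:ℝ)..t, E n r := by
      rw [intervalIntegral.integral_add hIxz hIE, intervalIntegral.integral_const_mul]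
    linarith [htel, hsumle, hsplit2]
  -- limit of the error integrals
  have hlim : Tendsto (fun n => ∫ r in (0:ℝ)..t, E n r) atTop (nhds 0) := by
    have h1 : (fun n => ∫ r in (0:ℝ)..t, E n r) =
        fun n => ∫ r in Ioc (0:ℝ) t, E n r :=
      funext (fun n => intervalIntegral.integral_of_le ht0)
    rw [h1]
    have haeIoo : ∀ᵐ r ∂volume.restrict (Ioc (0:ℝ) t), r ∈ Ioo (0:ℝ) t := by
      have hrw : volume.restrict (Ioc (0:ℝ) t) = volume.restrict (Ioo (0:ℝ) t) :=
        (Measure.restrict_congr_set Ioo_ae_eq_Ioc).symm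
      rw [hrw]
      exact ae_restrict_mem measurableSet_Ioo
    have hmain := MeasureTheory.tendsto_integral_of_dominated_convergence
      (F := fun n r => E n r) (f := fun _ => (0:ℝ))
      (bound := fun r => (8 * B + 3 * Z T) * ‖z r‖)
      (μ := volume.restrict (Ioc (0:ℝ) t))
      (fun n => (hEaesm n).mono_measure
        (Measure.restrict_mono Set.Ioc_subset_Icc_self le_rfl))
      (((hznorm.mono_set (Set.Ioc_subset_Icc_self.trans hIccsub))).const_mul _)
      (by
        intro n
        filter_upwards [haeIoo] with r hr
        have hr' : r ∈ Ico (0:ℝ) t := ⟨hr.1.le, hr.2⟩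
        rw [Real.norm_eq_abs, abs_of_nonneg (hEbound n r hr').1]
        exact (hEbound n r hr').2)
      (by
        filter_upwards [haeIoo] with r hr
        have hr0 : 0 ≤ r := hr.1.le
        have hrt : r < t := hr.2
        have hrT : r ∈ Set.Icc (0:ℝ) T := ⟨hr0, hrt.le.trans htT⟩
        -- endpoints of the partition interval containing r
        set g : ℕ → ℝ := fun n => ((⌊r / δ n⌋ : ℝ) + 1) * δ n - r with hgdef
        set l : ℕ → ℝ := fun n => (⌊r / δ n⌋ : ℝ) * δ n with hldef
        have hbnds : ∀ n : ℕ, 0 ≤ l n ∧ l n ≤ r ∧ r < l n + δ n ∧ l n + δ n ≤ t := by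
          intro n
          obtain ⟨k, hkn, hk, h1', h2'⟩ := hflmem n r hr0 hrt
          have hδ := hδpos n
          have hln : l n = (k:ℝ) * δ n := by
            rw [hldef]
            simp only [hk, Int.cast_natCast]
          refine ⟨?_, ?_, ?_, ?_⟩
          · rw [hln]; positivity
          · rw [hln]; exact h1'
          · rw [hln]; nlinarith
          · rw [hln, ← hδt n]
            have : (k:ℝ) + 1 ≤ (n:ℝ) + 1 := by
              have : (k:ℝ) ≤ (n:ℝ) := by exact_mod_cast hkn
              linarith
            nlinarith
        have hgl : ∀ n : ℕ, g n = l n + δ n - r := by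
          intro n
          rw [hgdef, hldef]
          ring
        have hg0 : Tendsto g atTop (nhds 0) := by
          apply squeeze_zero (fun n => ?_) (fun n => ?_) hδ0
          · rw [hgl n]; linarith [(hbnds n).2.2.1]
          · rw [hgl n]; linarith [(hbnds n).2.1]
        have hgnonneg : ∀ n, 0 ≤ g n := fun n => by
          rw [hgl n]; linarith [(hbnds n).2.2.1]
        -- convergence of the semigroup pieces
        have hSconv : ∀ y : H, Tendsto (fun n => S (max (g n) 0) y) atTop (nhds y) := by
          intro y
          have hc := hJC.tendsto ((0:ℝ), y)
          have hid : S (max (0:ℝ) 0) y = y := by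
            rw [max_self, hS0]; rfl
          have hpair : Tendsto (fun n => (g n, y)) atTop (nhds ((0:ℝ), y)) :=
            hg0.prodMk_nhds tendsto_const_nhds
          have := hc.comp hpair
          rwa [hid] at this
        have t1 : Tendsto (fun n => ‖z r‖ * ‖S (max (g n) 0) (X r) - X r‖) atTop (nhds 0) := by
          have h2 := ((hSconv (X r)).sub (tendsto_const_nhds (x := X r))).norm
          simp only [sub_self, norm_zero] at h2
          have := h2.const_mul ‖z r‖
          simpa using this
        have t2 : Tendsto (fun n => B * ‖S (max (g n) 0) (z r) - z r‖) atTop (nhds 0) := by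
          have h2 := ((hSconv (z r)).sub (tendsto_const_nhds (x := z r))).norm
          simp only [sub_self, norm_zero] at h2
          have := h2.const_mul B
          simpa using this
        -- convergence of the Z piece
        have hlconv : Tendsto l atTop (nhds r) := by
          apply tendsto_of_tendsto_of_tendsto_of_le_of_le
            (g := fun n => r - δ n) (h := fun _ => r)
            (by simpa using (tendsto_const_nhds (x := r)).sub hδ0)
            tendsto_const_nhds
            (fun n => by show r - δ n ≤ l n; linarith [(hbnds n).2.2.1])
            (fun n => (hbnds n).2.1)
        have huconv : Tendsto (fun n => l n + δ n) atTop (nhds r) := by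
          have := hlconv.add hδ0
          simpa using this
        have hZc : ContinuousWithinAt Z (Icc (0:ℝ) T) r := hZcont r hrT
        have hZu : Tendsto (fun n => Z (l n + δ n)) atTop (nhds (Z r)) := by
          apply hZc.tendsto.comp
          apply tendsto_nhdsWithin_of_tendsto_nhds_of_eventually_within _ huconv
          apply Filter.Eventually.of_forall
          intro n
          exact ⟨by linarith [(hbnds n).1, (hδpos n).le], (hbnds n).2.2.2.trans htT⟩
        have hZl : Tendsto (fun n => Z (l n)) atTop (nhds (Z r)) := by
          apply hZc.tendsto.comp
          apply tendsto_nhdsWithin_of_tendsto_nhds_of_eventually_within _ hlconv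
          apply Filter.Eventually.of_forall
          intro n
          exact ⟨(hbnds n).1, ((hbnds n).2.1.trans hrt.le).trans htT⟩
        have t3 : Tendsto (fun n => (Z (l n + δ n) - Z (l n)) * ‖z r‖) atTop (nhds 0) := by
          have := (hZu.sub hZl).mul_const ‖z r‖
          simpa using this
        -- assembling
        have hEeq : ∀ n : ℕ, E n r =
            2 * (‖z r‖ * ‖S (max (g n) 0) (X r) - X r‖) +
            2 * (B * ‖S (max (g n) 0) (z r) - z r‖) +
            3 * ((Z (l n + δ n) - Z (l n)) * ‖z r‖) := by
          intro n
          simp only [hEdef, hgdef, hldef]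
          ring_nf
        rw [show (fun n => E n r) = fun n =>
            2 * (‖z r‖ * ‖S (max (g n) 0) (X r) - X r‖) +
            2 * (B * ‖S (max (g n) 0) (z r) - z r‖) +
            3 * ((Z (l n + δ n) - Z (l n)) * ‖z r‖) from funext hEeq]
        have := ((t1.const_mul 2).add (t2.const_mul 2)).add (t3.const_mul 3)
        simpa using this)
    simpa using hmain
  -- conclusion
  have hfinal : ‖X t‖^2 - ‖X₀‖^2 - 2 * (∫ s in (0:ℝ)..t, ⟪X s, z s⟫) ≤ 0 := by
    apply ge_of_tendsto hlim
    apply Filter.Eventually.of_forall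
    intro n
    linarith [hsum n]
  linarith [hfinal]

end Aux

/-- Itô-type inequality for the convolution `X_t = S_t X₀ + ∫₀ᵗ S_{t-s} z(s) ds` with an
absolutely continuous integrator: for a `C₀`-semigroup of growth type `α`,
`‖X_t‖² ≤ e^{2αt} ‖X₀‖² + 2 ∫₀ᵗ e^{2α(t-s)} ⟪X_s, z(s)⟫ ds`. -/
theorem stmt_1 {H : Type*} [NormedAddCommGroup H] [InnerProductSpace ℝ H]
    [CompleteSpace H] [SecondCountableTopology H]
    (α : ℝ) (S : ℝ → H →L[ℝ] H)
    (hS0 : S 0 = ContinuousLinearMap.id ℝ H)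
    (hSsem : ∀ s t : ℝ, 0 ≤ s → 0 ≤ t → S (s + t) = (S s).comp (S t))
    (hScont : ∀ x : H, ContinuousOn (fun t => S t x) (Set.Ici 0))
    (hSgrowth : ∀ t : ℝ, 0 ≤ t → ‖S t‖ ≤ Real.exp (α * t))
    (X₀ : H) (T : ℝ) (hT : 0 < T) (z : ℝ → H)
    (hz : IntegrableOn z (Set.Icc 0 T))
    (X : ℝ → H)
    (hX : ∀ t ∈ Set.Icc (0 : ℝ) T, X t = S t X₀ + ∫ s in (0 : ℝ)..t, S (t - s) (z s)) :
    ∀ t ∈ Set.Icc (0 : ℝ) T,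
      ‖X t‖ ^ 2 ≤ Real.exp (2 * α * t) * ‖X₀‖ ^ 2 +
        2 * ∫ s in (0 : ℝ)..t, Real.exp (2 * α * (t - s)) * ⟪X s, z s⟫ := by
  intro t ht
  set S' : ℝ → H →L[ℝ] H := fun u => Real.exp (-α * u) • S u with hS'def
  set z' : ℝ → H := fun s => Real.exp (-α * s) • z s with hz'def
  set X' : ℝ → H := fun s => Real.exp (-α * s) • X s with hX'def
  have hS'0 : S' 0 = ContinuousLinearMap.id ℝ H := by
    rw [hS'def]
    simp [hS0]
  have hS'sem : ∀ s u : ℝ, 0 ≤ s → 0 ≤ u → S' (s + u) = (S' s).comp (S' u) := by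
    intro s u hs hu
    simp only [hS'def]
    rw [hSsem s u hs hu, ContinuousLinearMap.smul_comp, ContinuousLinearMap.comp_smul,
      smul_smul, ← Real.exp_add]
    ring_nf
  have hS'cont : ∀ x : H, ContinuousOn (fun u => S' u x) (Set.Ici 0) := by
    intro x
    simp only [hS'def, ContinuousLinearMap.smul_apply]
    exact ((Real.continuous_exp.comp
      (continuous_const.mul continuous_id)).continuousOn).smul (hScont x)
  have hS'b : ∀ u : ℝ, 0 ≤ u → ‖S' u‖ ≤ 1 := by
    intro u hu
    show ‖Real.exp (-α * u) • S u‖ ≤ 1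
    apply ContinuousLinearMap.opNorm_le_bound _ zero_le_one
    intro x
    rw [ContinuousLinearMap.smul_apply, norm_smul, Real.norm_eq_abs,
      abs_of_pos (Real.exp_pos _), one_mul]
    have h1 : ‖S u x‖ ≤ Real.exp (α * u) * ‖x‖ :=
      ((S u).le_opNorm x).trans
        (mul_le_mul_of_nonneg_right (hSgrowth u hu) (norm_nonneg x))
    calc Real.exp (-α * u) * ‖S u x‖ ≤ Real.exp (-α * u) * (Real.exp (α * u) * ‖x‖) :=
          mul_le_mul_of_nonneg_left h1 (Real.exp_pos _).le
    _ = ‖x‖ := by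
        rw [← mul_assoc, ← Real.exp_add, show -α * u + α * u = 0 from by ring,
          Real.exp_zero, one_mul]
  have hz' : IntegrableOn z' (Set.Icc 0 T) := by
    have hm : AEStronglyMeasurable z' (volume.restrict (Set.Icc 0 T)) :=
      ((Real.continuous_exp.comp
        (continuous_const.mul continuous_id)).aestronglyMeasurable).smul
        hz.aestronglyMeasurable
    apply Integrable.mono' (hz.norm.const_mul (Real.exp (|α| * T))) hm
    filter_upwards [ae_restrict_mem measurableSet_Icc] with s hs
    simp only [hz'def]
    rw [norm_smul, Real.norm_eq_abs, abs_of_pos (Real.exp_pos _)]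
    apply mul_le_mul_of_nonneg_right _ (norm_nonneg _)
    apply Real.exp_le_exp.mpr
    calc -α * s ≤ |(-α) * s| := le_abs_self _
    _ = |α| * |s| := by rw [abs_mul, abs_neg]
    _ ≤ |α| * T := by
        apply mul_le_mul_of_nonneg_left _ (abs_nonneg α)
        rw [abs_of_nonneg hs.1]
        exact hs.2
  have hXf : ∀ u ∈ Set.Icc (0:ℝ) T,
      X' u = S' u X₀ + ∫ s in (0:ℝ)..u, S' (u - s) (z' s) := by
    intro u hu
    have hpt : ∀ s : ℝ, S' (u - s) (z' s) = Real.exp (-α * u) • S (u - s) (z s) := by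
      intro s
      show (Real.exp (-α * (u - s)) • S (u - s)) (Real.exp (-α * s) • z s) =
        Real.exp (-α * u) • S (u - s) (z s)
      rw [ContinuousLinearMap.smul_apply, (S (u - s)).map_smul, smul_smul, ← Real.exp_add,
        show -α * (u - s) + -α * s = -α * u from by ring]
    show Real.exp (-α * u) • X u = S' u X₀ + ∫ s in (0:ℝ)..u, S' (u - s) (z' s)
    rw [hX u hu, smul_add]
    congr 1
    rw [← intervalIntegral.integral_smul]
    exact intervalIntegral.integral_congr (fun s _ => (hpt s).symm)
  have hkey := key S' hS'0 hS'sem hS'cont hS'b X₀ T hT z' hz' X' hXf t ht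
  have hXt : ‖X' t‖^2 = Real.exp (-(2*α)*t) * ‖X t‖^2 := by
    show ‖Real.exp (-α * t) • X t‖^2 = _
    rw [norm_smul, Real.norm_eq_abs, abs_of_pos (Real.exp_pos _), mul_pow, sq (Real.exp _),
      ← Real.exp_add, show -α * t + -α * t = -(2*α)*t from by ring]
  have hinner : ∀ s : ℝ, ⟪X' s, z' s⟫ = Real.exp (-(2*α)*s) * ⟪X s, z s⟫ := by
    intro s
    show ⟪Real.exp (-α * s) • X s, Real.exp (-α * s) • z s⟫ = _
    rw [real_inner_smul_left, real_inner_smul_right, ← mul_assoc, ← Real.exp_add,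
      show -α * s + -α * s = -(2*α)*s from by ring]
  rw [hXt] at hkey
  have hIrw : ∫ s in (0:ℝ)..t, ⟪X' s, z' s⟫ =
      ∫ s in (0:ℝ)..t, Real.exp (-(2*α)*s) * ⟪X s, z s⟫ :=
    intervalIntegral.integral_congr (fun s _ => hinner s)
  rw [hIrw] at hkey
  have hpos := Real.exp_pos (2*α*t)
  have hmul := mul_le_mul_of_nonneg_left hkey hpos.le
  have hL : Real.exp (2*α*t) * (Real.exp (-(2*α)*t) * ‖X t‖^2) = ‖X t‖^2 := by
    rw [← mul_assoc, ← Real.exp_add, show 2*α*t + -(2*α)*t = 0 from by ring,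
      Real.exp_zero, one_mul]
  have hR : Real.exp (2*α*t) * (∫ s in (0:ℝ)..t, Real.exp (-(2*α)*s) * ⟪X s, z s⟫) =
      ∫ s in (0:ℝ)..t, Real.exp (2*α*(t-s)) * ⟪X s, z s⟫ := by
    rw [← intervalIntegral.integral_const_mul]
    apply intervalIntegral.integral_congr
    intro s _
    show Real.exp (2*α*t) * (Real.exp (-(2*α)*s) * ⟪X s, z s⟫) =
      Real.exp (2*α*(t-s)) * ⟪X s, z s⟫
    rw [← mul_assoc, ← Real.exp_add]
    congr 2
    ring
  rw [hL, mul_add] at hmul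
  have hgoal : ∫ s in (0:ℝ)..t, Real.exp (2 * α * (t - s)) * ⟪X s, z s⟫ =
      Real.exp (2*α*t) * (∫ s in (0:ℝ)..t, Real.exp (-(2*α)*s) * ⟪X s, z s⟫) :=
    hR.symm
  rw [hgoal]
  ring_nf
  ring_nf at hmul
  linarith [hmul]
end

section
/- Let H be a real separable Hilbert space, (S_t)_{t≥0} a C₀-semigroup on H of growth type α, and let f : [0,∞) × H → H be jointly measurable, demicontinuous in its second variable, semimonotone in its second variable with constant M, and of linear growth with constant D. Let V : [0,∞) → H be càdlàg and X₀ ∈ H. If X and Y are both càdlàg functions [0,∞) → H satisfying U_t = S_t X₀ + ∫₀ᵗ S_{t−s} f(s, U_s) ds + V_t for all t ≥ 0 (with U = X, resp. U = Y), then X_t = Y_t for all t ≥ 0. -/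
open scoped RealInnerProductSpace
open MeasureTheory Filter

/-- A function `V : [0,∞) → H` is càdlàg: right-continuous at every `t ≥ 0` and with a
left limit at every `t > 0`. -/
def IsCadlag {H : Type*} [TopologicalSpace H] (V : ℝ → H) : Prop :=
  (∀ t : ℝ, 0 ≤ t → ContinuousWithinAt V (Set.Ici t) t) ∧
  (∀ t : ℝ, 0 < t → ∃ L : H, Tendsto V (nhdsWithin t (Set.Iio t)) (nhds L))

lemma cadlag_bdd {H : Type*} [NormedAddCommGroup H] {V : ℝ → H} (hV : IsCadlag V)
    (T : ℝ) : ∃ K : ℝ, 0 ≤ K ∧ ∀ s : ℝ, 0 ≤ s → s ≤ T → ‖V s‖ ≤ K := by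
  have H1 : ∀ s : ℝ, ∃ (U : Set ℝ) (B : ℝ), U ∈ nhds s ∧
      ∀ u ∈ U, 0 ≤ u → u ≤ T → ‖V u‖ ≤ B := by
    intro s
    rcases lt_or_ge s 0 with hs | hs
    · exact ⟨Set.Iio 0, 0, Iio_mem_nhds hs, fun u hu h0 _ =>
        absurd (lt_of_lt_of_le hu.out h0) (lt_irrefl u)⟩
    · have hr := hV.1 s hs
      have hr' : ∀ᶠ u in nhdsWithin s (Set.Ici s), ‖V u - V s‖ < 1 := by
        have := hr.tendsto (Metric.ball_mem_nhds (V s) one_pos)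
        filter_upwards [this] with u hu
        simpa [dist_eq_norm] using hu
      rcases eventually_nhdsWithin_iff.mp hr' |>.exists_mem with ⟨U₁, hU₁, hU₁'⟩
      obtain ⟨L, U₂, hU₂, hU₂'⟩ : ∃ (L : H) (U₂ : Set ℝ), U₂ ∈ nhds s ∧
          ∀ u ∈ U₂, 0 ≤ u → u < s → ‖V u - L‖ < 1 := by
        rcases eq_or_lt_of_le hs with hs0 | hs0
        · exact ⟨0, Set.Ioi (-1), Ioi_mem_nhds (by linarith), fun u hu h0 hus => by
            exfalso; rw [← hs0] at hus; linarith⟩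
        · rcases hV.2 s hs0 with ⟨L, hL⟩
          have : ∀ᶠ u in nhdsWithin s (Set.Iio s), ‖V u - L‖ < 1 := by
            have := hL (Metric.ball_mem_nhds L one_pos)
            filter_upwards [this] with u hu
            simpa [dist_eq_norm] using hu
          rcases eventually_nhdsWithin_iff.mp this |>.exists_mem with ⟨U₂, hU₂, hU₂'⟩
          exact ⟨L, U₂, hU₂, fun u hu _ hus => hU₂' u hu hus⟩
      refine ⟨U₁ ∩ U₂, max (‖V s‖ + 1) (‖L‖ + 1), Filter.inter_mem hU₁ hU₂, ?_⟩
      intro u hu h0 _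
      rcases le_or_gt s u with hsu | hsu
      · have h1 := hU₁' u hu.1 hsu
        have : ‖V u‖ ≤ ‖V u - V s‖ + ‖V s‖ := by
          calc ‖V u‖ = ‖V u - V s + V s‖ := by rw [sub_add_cancel]
            _ ≤ ‖V u - V s‖ + ‖V s‖ := norm_add_le _ _
        exact le_max_of_le_left (by linarith)
      · have h1 := hU₂' u hu.2 h0 hsu
        have : ‖V u‖ ≤ ‖V u - L‖ + ‖L‖ := by
          calc ‖V u‖ = ‖V u - L + L‖ := by rw [sub_add_cancel]
            _ ≤ ‖V u - L‖ + ‖L‖ := norm_add_le _ _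
        exact le_max_of_le_right (by linarith)
  choose U B hU hB using H1
  obtain ⟨t, ht⟩ := (isCompact_Icc (a := (0:ℝ)) (b := T)).elim_nhds_subcover U (fun x _ => hU x)
  refine ⟨∑ x ∈ t, |B x|, Finset.sum_nonneg fun x _ => abs_nonneg _, ?_⟩
  intro s h0 hT
  obtain ⟨x, hx, hsx⟩ := Set.mem_iUnion₂.mp (ht.2 ⟨h0, hT⟩)
  calc ‖V s‖ ≤ B x := hB x s hsx h0 hT
    _ ≤ |B x| := le_abs_self _
    _ ≤ ∑ x ∈ t, |B x| := Finset.single_le_sum (fun y _ => abs_nonneg (B y)) hx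


lemma rc_measurable {H : Type*} [MeasurableSpace H] [TopologicalSpace H]
    [TopologicalSpace.PseudoMetrizableSpace H] [BorelSpace H] {V : ℝ → H}
    (hV : ∀ t : ℝ, 0 ≤ t → ContinuousWithinAt V (Set.Ici t) t) :
    Measurable fun s => V (max s 0) := by
  have hWn : ∀ n : ℕ, Measurable fun s : ℝ =>
      V (max ((⌊s * 2 ^ n⌋ + 1 : ℤ) / 2 ^ n : ℝ) 0) := by
    intro n
    have h1 : Measurable fun s : ℝ => (⌊s * 2 ^ n⌋ : ℤ) :=
      (measurable_id.mul_const _).floor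
    exact (Measurable.of_discrete (f :=
      (fun k : ℤ => V (max ((k + 1 : ℤ) / 2 ^ n : ℝ) 0)))).comp h1
  apply measurable_of_tendsto_metrizable hWn
  rw [tendsto_pi_nhds]
  intro s
  set u : ℝ := max s 0 with hu
  have hu0 : (0:ℝ) ≤ u := le_max_right s 0
  have ha : Tendsto (fun n : ℕ => ((⌊s * 2 ^ n⌋ + 1 : ℤ) / 2 ^ n : ℝ)) atTop (nhds s) := by
    have hup : Tendsto (fun n : ℕ => s + (1/2) ^ n) atTop (nhds s) := by
      simpa using (tendsto_pow_atTop_nhds_zero_of_lt_one (by norm_num)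
        (by norm_num : (1:ℝ)/2 < 1)).const_add s
    apply tendsto_of_tendsto_of_tendsto_of_le_of_le (tendsto_const_nhds) hup
    · intro n
      have h := Int.lt_floor_add_one (s * 2 ^ n)
      have h2 : (0:ℝ) < 2 ^ n := by positivity
      rw [le_div_iff₀ h2]
      push_cast
      linarith
    · intro n
      have h := Int.floor_le (s * 2 ^ n)
      have h2 : (0:ℝ) < 2 ^ n := by positivity
      rw [div_le_iff₀ h2]
      push_cast
      have : (1/2 : ℝ) ^ n * 2 ^ n = 1 := by
        rw [← mul_pow]; norm_num
      nlinarith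
  have hb : Tendsto (fun n : ℕ => max ((⌊s * 2 ^ n⌋ + 1 : ℤ) / 2 ^ n : ℝ) 0) atTop (nhds u) :=
    ha.max tendsto_const_nhds
  have hmem : ∀ n : ℕ, max ((⌊s * 2 ^ n⌋ + 1 : ℤ) / 2 ^ n : ℝ) 0 ∈ Set.Ici u := by
    intro n
    have h := Int.floor_le (s * 2 ^ n)
    have h2 : (0:ℝ) < 2 ^ n := by positivity
    have : s ≤ ((⌊s * 2 ^ n⌋ + 1 : ℤ) / 2 ^ n : ℝ) := by
      rw [le_div_iff₀ h2]; push_cast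
      have := Int.lt_floor_add_one (s * 2 ^ n)
      linarith
    exact max_le_max this le_rfl
  exact (hV u hu0).tendsto.comp
    (tendsto_nhdsWithin_iff.mpr ⟨hb, Eventually.of_forall hmem⟩)


lemma gronwall_iter {φ : ℝ → ℝ} {T C K2 : ℝ} (hC : 0 ≤ C) (hK2 : 0 ≤ K2)
    (hmeas : Measurable φ) (hnonneg : ∀ s, 0 ≤ φ s)
    (hbdd : ∀ s ∈ Set.Icc (0:ℝ) T, φ s ≤ K2)
    (hkey : ∀ t ∈ Set.Icc (0:ℝ) T, φ t ≤ C * ∫ s in (0:ℝ)..t, φ s) :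
    ∀ t ∈ Set.Icc (0:ℝ) T, φ t = 0 := by
  have hint : ∀ t ∈ Set.Icc (0:ℝ) T, IntervalIntegrable φ volume 0 t := by
    intro t ht
    rw [intervalIntegrable_iff]
    refine Integrable.mono' (g := fun _ => K2) (integrableOn_const
      (measure_Ioc_lt_top.ne)) hmeas.aestronglyMeasurable ?_
    refine (ae_restrict_iff' measurableSet_uIoc).mpr (Eventually.of_forall ?_)
    intro s hs
    rw [Set.uIoc_of_le ht.1] at hs
    rw [Real.norm_eq_abs, abs_of_nonneg (hnonneg s)]
    exact hbdd s ⟨hs.1.le, hs.2.trans ht.2⟩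
  have main : ∀ m : ℕ, ∀ t ∈ Set.Icc (0:ℝ) T, φ t ≤ K2 * (C * t) ^ m / m.factorial := by
    intro m
    induction m with
    | zero => intro t ht; simpa using hbdd t ht
    | succ m ih =>
      intro t ht
      have h1 : φ t ≤ C * ∫ s in (0:ℝ)..t, φ s := hkey t ht
      have h2 : ∫ s in (0:ℝ)..t, φ s ≤ ∫ s in (0:ℝ)..t, K2 * (C * s) ^ m / m.factorial := by
        apply intervalIntegral.integral_mono_on ht.1 (hint t ht)
        · apply Continuous.intervalIntegrable; continuity
        · intro x hx
          exact ih x ⟨hx.1, hx.2.trans ht.2⟩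
      have h3 : ∫ s in (0:ℝ)..t, K2 * (C * s) ^ m / m.factorial
          = K2 * C ^ m / m.factorial * (t ^ (m+1) / (m+1)) := by
        have : ∀ s : ℝ, K2 * (C * s) ^ m / m.factorial
            = K2 * C ^ m / m.factorial * s ^ m := by
          intro s; rw [mul_pow]; ring
        simp_rw [this]
        rw [intervalIntegral.integral_const_mul, integral_pow]
        simp
      calc φ t ≤ C * ∫ s in (0:ℝ)..t, φ s := h1
        _ ≤ C * (K2 * C ^ m / m.factorial * (t ^ (m+1) / (m+1))) := by
          rw [← h3]; exact mul_le_mul_of_nonneg_left h2 hC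
        _ = K2 * (C * t) ^ (m+1) / (m+1).factorial := by
          rw [mul_pow, Nat.factorial_succ]
          push_cast
          field_simp
          ring
  intro t ht
  have htend : Tendsto (fun m : ℕ => K2 * (C * t) ^ m / m.factorial) atTop (nhds 0) := by
    have := FloorSemiring.tendsto_pow_div_factorial_atTop (K := ℝ) (C * t)
    have h2 := this.const_mul K2
    simpa [mul_div_assoc] using h2
  have hle : φ t ≤ 0 := ge_of_tendsto htend (Eventually.of_forall fun m => main m t ht)
  exact le_antisymm hle (hnonneg t)


section
variable {H : Type*} [NormedAddCommGroup H] [InnerProductSpace ℝ H]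
  [CompleteSpace H] [SecondCountableTopology H] [MeasurableSpace H] [BorelSpace H]

lemma Sp_norm_bound {H : Type*} [NormedAddCommGroup H] [NormedSpace ℝ H]
    (α : ℝ) (S : ℝ → H →L[ℝ] H) (hS0 : S 0 = ContinuousLinearMap.id ℝ H)
    (hSgrowth : ∀ t : ℝ, 0 ≤ t → ‖S t‖ ≤ Real.exp (α * t)) (u : ℝ) :
    ‖S (max u 0)‖ ≤ Real.exp (|α| * |u|) := by
  rcases le_or_gt u 0 with hu | hu
  · rw [max_eq_right hu, hS0]
    calc ‖(ContinuousLinearMap.id ℝ H)‖ ≤ 1 := ContinuousLinearMap.norm_id_le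
      _ ≤ Real.exp (|α| * |u|) := by
        rw [← Real.exp_zero]; exact Real.exp_le_exp.mpr (by positivity)
  · rw [max_eq_left hu.le]
    refine (hSgrowth u hu.le).trans (Real.exp_le_exp.mpr ?_)
    calc α * u ≤ |α * u| := le_abs_self _
      _ = |α| * |u| := abs_mul _ _


lemma Sp_cont {H : Type*} [NormedAddCommGroup H] [NormedSpace ℝ H]
    (α : ℝ) (S : ℝ → H →L[ℝ] H) (hS0 : S 0 = ContinuousLinearMap.id ℝ H)
    (hScont : ∀ x : H, ContinuousOn (fun t => S t x) (Set.Ici 0))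
    (hSgrowth : ∀ t : ℝ, 0 ≤ t → ‖S t‖ ≤ Real.exp (α * t)) :
    Continuous fun p : ℝ × H => S (max p.1 0) p.2 := by
  have hone : ∀ x : H, Continuous fun u : ℝ => S (max u 0) x := by
    intro x
    exact (hScont x).comp_continuous (continuous_id.max continuous_const)
      (fun u => le_max_right u 0)
  rw [continuous_iff_continuousAt]
  rintro ⟨u₀, x₀⟩
  have key : Tendsto (fun p : ℝ × H => S (max p.1 0) p.2 - S (max u₀ 0) x₀)
      (nhds (u₀, x₀)) (nhds 0) := by
    have hsplit : ∀ p : ℝ × H, S (max p.1 0) p.2 - S (max u₀ 0) x₀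
        = S (max p.1 0) (p.2 - x₀) + (S (max p.1 0) x₀ - S (max u₀ 0) x₀) := by
      intro p; rw [map_sub]; abel
    rw [show (0 : H) = 0 + 0 by simp]
    refine Tendsto.congr (fun p => (hsplit p).symm) (Tendsto.add ?_ ?_)
    · apply squeeze_zero_norm
        (a := fun p : ℝ × H => Real.exp (|α| * |p.1|) * ‖p.2 - x₀‖)
      · intro p
        calc ‖S (max p.1 0) (p.2 - x₀)‖ ≤ ‖S (max p.1 0)‖ * ‖p.2 - x₀‖ :=
            ContinuousLinearMap.le_opNorm _ _
          _ ≤ Real.exp (|α| * |p.1|) * ‖p.2 - x₀‖ := by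
            apply mul_le_mul_of_nonneg_right (Sp_norm_bound α S hS0 hSgrowth p.1)
              (norm_nonneg _)
      · have : Continuous fun p : ℝ × H => Real.exp (|α| * |p.1|) * ‖p.2 - x₀‖ := by
          continuity
        have h0 : Real.exp (|α| * |u₀|) * ‖x₀ - x₀‖ = 0 := by simp
        simpa [h0] using this.tendsto (u₀, x₀)
    · have := ((hone x₀).tendsto u₀).comp (continuous_fst.tendsto (u₀, x₀))
      simpa [sub_self] using (this.sub_const (S (max u₀ 0) x₀))
  have := key.add (tendsto_const_nhds (x := S (max u₀ 0) x₀))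
  simpa [ContinuousAt] using this

lemma II_of_bound {E : Type*} [NormedAddCommGroup E] {w : ℝ → E} {a b C : ℝ}
    (hw : AEStronglyMeasurable w (volume : Measure ℝ))
    (h : ∀ s ∈ Set.uIoc a b, ‖w s‖ ≤ C) : IntervalIntegrable w volume a b := by
  rw [intervalIntegrable_iff]
  refine Integrable.mono' (g := fun _ => C)
    (integrableOn_const measure_Ioc_lt_top.ne) hw.restrict ?_
  exact (ae_restrict_iff' measurableSet_uIoc).mpr (Eventually.of_forall h)

noncomputable def psifun {H : Type*} [NormedAddCommGroup H] [InnerProductSpace ℝ H]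
    (α : ℝ) (S : ℝ → H →L[ℝ] H) (Z g : ℝ → H) (t : ℝ) (n : ℕ) (s : ℝ) : ℝ :=
  2 * Real.exp (2 * α * (t / n)) ^ (n - 1 - ⌊s / (t / n)⌋₊) *
    ⟪S (max (t / n) 0) (Z ((⌊s / (t / n)⌋₊ : ℝ) * (t / n))),
      S (max (((⌊s / (t / n)⌋₊ : ℝ) + 1) * (t / n) - s) 0) (g s)⟫

lemma psifun_meas {α : ℝ} {S : ℝ → H →L[ℝ] H} {Z g : ℝ → H} {t : ℝ} {n : ℕ}
    (hΦ : Continuous fun p : ℝ × H => S (max p.1 0) p.2)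
    (hg : Measurable g) : Measurable (psifun α S Z g t n) := by
  have hrepr : psifun α S Z g t n = (fun q : ℝ × ℕ =>
      2 * Real.exp (2 * α * (t / n)) ^ (n - 1 - q.2) *
      ⟪S (max (t / n) 0) (Z ((q.2 : ℝ) * (t / n))),
        S (max (((q.2 : ℝ) + 1) * (t / n) - q.1) 0) (g q.1)⟫) ∘
      (fun s : ℝ => (s, ⌊s / (t / n)⌋₊)) := rfl
  rw [hrepr]
  apply Measurable.comp
  · apply measurable_from_prod_countable_left
    intro j
    simp only
    apply Measurable.mul measurable_const
    apply Measurable.inner measurable_const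
    exact hΦ.measurable.comp ((measurable_const.sub measurable_id).prodMk hg)
  · exact measurable_id.prodMk (measurable_id.div_const _).nat_floor

set_option maxHeartbeats 2000000 in
lemma key_ineq (α T : ℝ) (hT0 : 0 ≤ T) (S : ℝ → H →L[ℝ] H)
    (hS0 : S 0 = ContinuousLinearMap.id ℝ H)
    (hScont : ∀ x : H, ContinuousOn (fun t => S t x) (Set.Ici 0))
    (hSgrowth : ∀ t : ℝ, 0 ≤ t → ‖S t‖ ≤ Real.exp (α * t))
    (Z g : ℝ → H) (hZmeas : Measurable Z) (hgmeas : Measurable g)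
    (hZ0 : Z 0 = 0)
    (hZrc : ∀ s : ℝ, 0 ≤ s → ContinuousWithinAt Z (Set.Ici s) s)
    (KZ G M' : ℝ) (hM' : 0 ≤ M')
    (hKZ : ∀ s : ℝ, 0 ≤ s → s ≤ T → ‖Z s‖ ≤ KZ)
    (hG : ∀ s : ℝ, 0 ≤ s → s ≤ T → ‖g s‖ ≤ G)
    (hshift : ∀ a b : ℝ, 0 ≤ a → a ≤ b → b ≤ T →
      Z b = S (max (b - a) 0) (Z a) + ∫ s in a..b, S (max (b - s) 0) (g s))
    (hinner : ∀ s : ℝ, 0 ≤ s → s ≤ T → ⟪Z s, g s⟫ ≤ M' * ‖Z s‖ ^ 2) :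
    ∀ t : ℝ, 0 ≤ t → t ≤ T →
      ‖Z t‖ ^ 2 ≤ 2 * Real.exp (2 * |α| * T) * M' * ∫ s in (0:ℝ)..t, ‖Z s‖ ^ 2 := by
  have hKZ0 : 0 ≤ KZ := le_trans (norm_nonneg _) (hKZ T hT0 le_rfl)
  have hG0 : 0 ≤ G := le_trans (norm_nonneg _) (hG T hT0 le_rfl)
  set E : ℝ := Real.exp (|α| * T) with hE_def
  set E2 : ℝ := Real.exp (2 * |α| * T) with hE2_def
  have hE1 : (1:ℝ) ≤ E := by
    rw [hE_def, ← Real.exp_zero]; exact Real.exp_le_exp.mpr (by positivity)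
  have hE21 : (1:ℝ) ≤ E2 := by
    rw [hE2_def, ← Real.exp_zero]; exact Real.exp_le_exp.mpr (by positivity)
  have hEpos : 0 < E := lt_of_lt_of_le one_pos hE1
  have hE2pos : 0 < E2 := lt_of_lt_of_le one_pos hE21
  have hΦ : Continuous fun p : ℝ × H => S (max p.1 0) p.2 :=
    Sp_cont α S hS0 hScont hSgrowth
  have hSnorm : ∀ u : ℝ, |u| ≤ T → ‖S (max u 0)‖ ≤ E := by
    intro u hu
    refine (Sp_norm_bound α S hS0 hSgrowth u).trans (Real.exp_le_exp.mpr ?_)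
    exact mul_le_mul_of_nonneg_left hu (abs_nonneg α)
  have habsT : ∀ c s : ℝ, 0 ≤ c → c ≤ T → 0 ≤ s → s ≤ T → |c - s| ≤ T := by
    intro c s h1 h2 h3 h4; rw [abs_le]; constructor <;> linarith
  -- the integrand with values S (max (c-s) 0) (g s)
  have hSg_meas : ∀ c : ℝ, Measurable fun s => S (max (c - s) 0) (g s) := by
    intro c
    exact hΦ.measurable.comp ((measurable_const.sub measurable_id).prodMk hgmeas)
  have hSg_bound : ∀ c s : ℝ, 0 ≤ c → c ≤ T → 0 ≤ s → s ≤ T →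
      ‖S (max (c - s) 0) (g s)‖ ≤ E * G := by
    intro c s h1 h2 h3 h4
    calc ‖S (max (c - s) 0) (g s)‖ ≤ ‖S (max (c - s) 0)‖ * ‖g s‖ :=
        ContinuousLinearMap.le_opNorm _ _
      _ ≤ E * G := mul_le_mul (hSnorm _ (habsT c s h1 h2 h3 h4)) (hG s h3 h4)
          (norm_nonneg _) hEpos.le
  have hIIg : ∀ c a b : ℝ, 0 ≤ a → a ≤ b → b ≤ T → 0 ≤ c → c ≤ T →
      IntervalIntegrable (fun s => S (max (c - s) 0) (g s)) volume a b := by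
    intro c a b h1 h2 h3 h4 h5
    apply II_of_bound (hSg_meas c).aestronglyMeasurable (C := E * G)
    intro s hs
    rw [Set.uIoc_of_le h2] at hs
    exact hSg_bound c s h4 h5 (h1.trans hs.1.le) (hs.2.trans h3)
  have hZsq_meas : Measurable fun s : ℝ => ‖Z s‖ ^ 2 := (hZmeas.norm.pow_const 2)
  have hIIZsq : ∀ a b : ℝ, 0 ≤ a → a ≤ b → b ≤ T →
      IntervalIntegrable (fun s : ℝ => ‖Z s‖ ^ 2) volume a b := by
    intro a b h1 h2 h3
    apply II_of_bound hZsq_meas.aestronglyMeasurable (C := KZ ^ 2)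
    intro s hs
    rw [Set.uIoc_of_le h2] at hs
    rw [Real.norm_eq_abs, abs_of_nonneg (by positivity)]
    have := hKZ s (h1.trans hs.1.le) (hs.2.trans h3)
    nlinarith [norm_nonneg (Z s)]
  intro t ht0' htT
  rcases ht0'.eq_or_lt with h0 | ht0
  · rw [← h0]
    simp [hZ0]
  set B : ℝ := 2 * E2 * (E * KZ) * (E * G) with hB_def
  have hB0 : 0 ≤ B := by positivity
  have hψmeas : ∀ n : ℕ, Measurable (psifun α S Z g t n) :=
    fun n => psifun_meas hΦ hgmeas
  have hψbdd : ∀ n : ℕ, ∀ s ∈ Set.Ioc 0 t, |psifun α S Z g t n s| ≤ B := by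
    intro n s hs
    rcases Nat.eq_zero_or_pos n with rfl | hn
    · have h0 : psifun α S Z g t 0 s = 0 := by
        simp [psifun, hZ0]
      rw [h0]; simpa using hB0
    have hnR : (1:ℝ) ≤ (n:ℝ) := by exact_mod_cast hn
    have hnpos : (0:ℝ) < (n:ℝ) := by linarith
    set Δ := t / n with hΔ
    have hΔpos : 0 < Δ := div_pos ht0 hnpos
    have hΔt : Δ ≤ t := div_le_self ht0.le hnR
    have hΔT : Δ ≤ T := hΔt.trans htT
    set k := ⌊s / Δ⌋₊ with hk
    have hsΔ0 : 0 ≤ s / Δ := div_nonneg hs.1.le hΔpos.le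
    have hks : (k:ℝ) * Δ ≤ s := by
      rw [← le_div_iff₀ hΔpos]
      exact Nat.floor_le hsΔ0
    have hsk : s < ((k:ℝ) + 1) * Δ := by
      rw [← div_lt_iff₀ hΔpos]
      exact_mod_cast Nat.lt_floor_add_one (s / Δ)
    have hkt : (k:ℝ) * Δ ≤ t := le_trans hks hs.2
    have hkΔ0 : 0 ≤ (k:ℝ) * Δ := by positivity
    have hApow : Real.exp (2 * α * Δ) ^ (n - 1 - k) ≤ E2 := by
      rw [← Real.exp_nat_mul]
      apply Real.exp_le_exp.mpr
      have h1 : (n - 1 - k : ℕ) ≤ n := by omega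
      have h2 : ((n - 1 - k : ℕ):ℝ) ≤ (n:ℝ) := by exact_mod_cast h1
      have hm : ((n - 1 - k : ℕ):ℝ) * Δ ≤ T := by
        calc ((n-1-k : ℕ):ℝ) * Δ ≤ (n:ℝ) * Δ := mul_le_mul_of_nonneg_right h2 hΔpos.le
          _ = t := by rw [hΔ]; field_simp
          _ ≤ T := htT
      calc ((n-1-k:ℕ):ℝ) * (2 * α * Δ) ≤ |((n-1-k:ℕ):ℝ) * (2 * α * Δ)| := le_abs_self _
        _ = 2 * |α| * (((n-1-k:ℕ):ℝ) * Δ) := by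
          rw [abs_mul, abs_mul, abs_mul]
          rw [abs_of_nonneg (Nat.cast_nonneg _), abs_of_nonneg hΔpos.le,
            abs_of_nonneg (by norm_num : (0:ℝ) ≤ 2)]
          ring
        _ ≤ 2 * |α| * T := mul_le_mul_of_nonneg_left hm (by positivity)
    have hv1 : ‖S (max Δ 0) (Z ((k:ℝ) * Δ))‖ ≤ E * KZ := by
      calc ‖S (max Δ 0) (Z ((k:ℝ)*Δ))‖ ≤ ‖S (max Δ 0)‖ * ‖Z ((k:ℝ)*Δ)‖ :=
          ContinuousLinearMap.le_opNorm _ _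
        _ ≤ E * KZ := mul_le_mul (hSnorm Δ (by rw [abs_of_pos hΔpos]; exact hΔT))
            (hKZ _ hkΔ0 (hkt.trans htT)) (norm_nonneg _) hEpos.le
    have hv2 : ‖S (max (((k:ℝ)+1) * Δ - s) 0) (g s)‖ ≤ E * G := by
      have hd1 : ((k:ℝ)+1)*Δ - s ≤ Δ := by ring_nf; ring_nf at hks; linarith
      have habs : |((k:ℝ)+1) * Δ - s| ≤ T := by
        rw [abs_of_pos (by linarith)]
        linarith
      calc ‖S (max (((k:ℝ)+1) * Δ - s) 0) (g s)‖
          ≤ ‖S (max (((k:ℝ)+1)*Δ - s) 0)‖ * ‖g s‖ := ContinuousLinearMap.le_opNorm _ _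
        _ ≤ E * G := mul_le_mul (hSnorm _ habs) (hG s hs.1.le (hs.2.trans htT))
            (norm_nonneg _) hEpos.le
    have hApos' : 0 < Real.exp (2*α*Δ) ^ (n-1-k) := pow_pos (Real.exp_pos _) _
    have hin : |⟪S (max Δ 0) (Z ((k:ℝ)*Δ)), S (max (((k:ℝ)+1)*Δ - s) 0) (g s)⟫|
        ≤ (E*KZ)*(E*G) := (abs_real_inner_le_norm _ _).trans
          (mul_le_mul hv1 hv2 (norm_nonneg _) (by positivity))
    show |2 * Real.exp (2*α*Δ) ^ (n-1-k) *
      ⟪S (max Δ 0) (Z ((k:ℝ)*Δ)), S (max (((k:ℝ)+1)*Δ - s) 0) (g s)⟫| ≤ B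
    rw [abs_mul, abs_mul, abs_of_nonneg (by norm_num : (0:ℝ) ≤ 2), abs_of_pos hApos']
    rw [hB_def]
    nlinarith [mul_le_mul hApow hin (abs_nonneg _) hE2pos.le]
  have hmain : ∀ n : ℕ, 1 ≤ n →
      ‖Z t‖ ^ 2 ≤ (∫ s in (0:ℝ)..t, psifun α S Z g t n s)
        + E2 * (E * G) ^ 2 * t ^ 2 / n := by
    intro n hn
    have hnR : (1:ℝ) ≤ (n:ℝ) := by exact_mod_cast hn
    have hnpos : (0:ℝ) < (n:ℝ) := by linarith
    set Δ := t / n with hΔ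
    have hΔpos : 0 < Δ := div_pos ht0 hnpos
    have hΔt : Δ ≤ t := div_le_self ht0.le hnR
    have hΔT : Δ ≤ T := hΔt.trans htT
    set tk : ℕ → ℝ := fun k => (k:ℝ) * Δ with htkd
    have htk0 : tk 0 = 0 := by simp [htkd]
    have htkn : tk n = t := by
      rw [htkd]; simp only; rw [hΔ]; field_simp
    have htkle : ∀ k : ℕ, k ≤ n → tk k ≤ t := by
      intro k hk
      have hc : (k:ℝ) ≤ (n:ℝ) := by exact_mod_cast hk
      calc tk k = (k:ℝ) * Δ := rfl
        _ ≤ (n:ℝ) * Δ := mul_le_mul_of_nonneg_right hc hΔpos.le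
        _ = t := by rw [hΔ]; field_simp
    have htknn : ∀ k : ℕ, 0 ≤ tk k := fun k =>
      mul_nonneg (Nat.cast_nonneg k) hΔpos.le
    have htkd1 : ∀ k : ℕ, tk (k+1) - tk k = Δ := by
      intro k; rw [htkd]; push_cast; ring
    have htkmono : ∀ k : ℕ, tk k ≤ tk (k+1) := by
      intro k; have := htkd1 k; linarith
    set A := Real.exp (2 * α * Δ) with hA
    have hApos : 0 < A := Real.exp_pos _
    set Ik : ℕ → H := fun k =>
      ∫ s in tk k..tk (k+1), S (max (tk (k+1) - s) 0) (g s) with hIkd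
    set d : ℕ → ℝ := fun k =>
      2 * ⟪S (max Δ 0) (Z (tk k)), Ik k⟫ + ‖Ik k‖^2 with hdd
    have hstep : ∀ k : ℕ, k + 1 ≤ n → ‖Z (tk (k+1))‖^2 ≤ A * ‖Z (tk k)‖^2 + d k := by
      intro k hk
      have heq := hshift (tk k) (tk (k+1)) (htknn k) (htkmono k)
        ((htkle (k+1) hk).trans htT)
      rw [htkd1 k] at heq
      rw [heq, norm_add_sq_real]
      have hSb : ‖S (max Δ 0) (Z (tk k))‖^2 ≤ A * ‖Z (tk k)‖^2 := by
        have h1 : ‖S (max Δ 0) (Z (tk k))‖ ≤ Real.exp (α * Δ) * ‖Z (tk k)‖ := by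
          calc ‖S (max Δ 0) (Z (tk k))‖ ≤ ‖S (max Δ 0)‖ * ‖Z (tk k)‖ :=
              ContinuousLinearMap.le_opNorm _ _
            _ ≤ Real.exp (α * Δ) * ‖Z (tk k)‖ := by
              apply mul_le_mul_of_nonneg_right _ (norm_nonneg _)
              rw [max_eq_left hΔpos.le]
              exact hSgrowth Δ hΔpos.le
        have h2 : ‖S (max Δ 0) (Z (tk k))‖^2 ≤ (Real.exp (α * Δ))^2 * ‖Z (tk k)‖^2 := by
          rw [← mul_pow]
          exact pow_le_pow_left₀ (norm_nonneg _) h1 2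
        have h3 : (Real.exp (α * Δ))^2 = A := by
          rw [hA, pow_two, ← Real.exp_add]; ring_nf
        rw [h3] at h2; exact h2
      simp only [hdd, hIkd]
      linarith [hSb]
    have htel : ∀ k : ℕ, k ≤ n →
        ‖Z (tk k)‖^2 ≤ ∑ j ∈ Finset.range k, A^(k-1-j) * d j := by
      intro k
      induction k with
      | zero => intro _; rw [htk0, hZ0]; simp
      | succ k ih =>
        intro hk1
        have hk : k ≤ n := Nat.le_of_succ_le hk1
        have h1 := hstep k hk1
        have h2 := ih hk
        have h4 : A * (∑ j ∈ Finset.range k, A^(k-1-j) * d j) + d k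
            = ∑ j ∈ Finset.range (k+1), A^(k-j) * d j := by
          rw [Finset.mul_sum, Finset.sum_range_succ]
          congr 1
          · apply Finset.sum_congr rfl
            intro j hj
            have hjk : j < k := Finset.mem_range.mp hj
            rw [← mul_assoc, ← pow_succ']
            congr 2
            omega
          · simp
        calc ‖Z (tk (k+1))‖^2 ≤ A * ‖Z (tk k)‖^2 + d k := h1
          _ ≤ A * (∑ j ∈ Finset.range k, A^(k-1-j) * d j) + d k := by
            have := mul_le_mul_of_nonneg_left h2 hApos.le
            linarith
          _ = ∑ j ∈ Finset.range (k+1), A^(k-j) * d j := h4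
          _ = ∑ j ∈ Finset.range (k+1), A^((k+1)-1-j) * d j := by
            simp
    have hIkb : ∀ k : ℕ, k + 1 ≤ n → ‖Ik k‖ ≤ E * G * Δ := by
      intro k hk
      have hb2 : ∀ u ∈ Set.uIoc (tk k) (tk (k+1)),
          ‖S (max (tk (k+1) - u) 0) (g u)‖ ≤ E * G := by
        intro u hu
        rw [Set.uIoc_of_le (htkmono k)] at hu
        exact hSg_bound (tk (k+1)) u (htknn (k+1)) ((htkle (k+1) hk).trans htT)
          ((htknn k).trans hu.1.le) ((hu.2.trans (htkle (k+1) hk)).trans htT)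
      have hbound := intervalIntegral.norm_integral_le_of_norm_le_const hb2
      have habs : |tk (k+1) - tk k| = Δ := by rw [htkd1 k, abs_of_pos hΔpos]
      rw [habs] at hbound
      simp only [hIkd]
      exact hbound
    have hAmb : ∀ m : ℕ, m ≤ n → A^m ≤ E2 := by
      intro m hm
      rw [hA, ← Real.exp_nat_mul]
      apply Real.exp_le_exp.mpr
      have h2 : (m:ℝ) ≤ (n:ℝ) := by exact_mod_cast hm
      have hmΔ : (m:ℝ) * Δ ≤ T := by
        calc (m:ℝ) * Δ ≤ (n:ℝ) * Δ := mul_le_mul_of_nonneg_right h2 hΔpos.le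
          _ = t := by rw [hΔ]; field_simp
          _ ≤ T := htT
      calc (m:ℝ) * (2*α*Δ) ≤ |(m:ℝ) * (2*α*Δ)| := le_abs_self _
        _ = 2 * |α| * ((m:ℝ)*Δ) := by
          rw [abs_mul, abs_mul, abs_mul, abs_of_nonneg (Nat.cast_nonneg _),
            abs_of_nonneg hΔpos.le, abs_of_nonneg (by norm_num : (0:ℝ) ≤ 2)]
          ring
        _ ≤ 2 * |α| * T := mul_le_mul_of_nonneg_left hmΔ (by positivity)
    have hψint : ∀ k : ℕ, k < n →
        IntervalIntegrable (psifun α S Z g t n) volume (tk k) (tk (k+1)) := by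
      intro k hk
      apply II_of_bound (hψmeas n).aestronglyMeasurable (C := B)
      intro u hu
      rw [Set.uIoc_of_le (htkmono k)] at hu
      have h1 : u ∈ Set.Ioc 0 t :=
        ⟨lt_of_le_of_lt (htknn k) hu.1, hu.2.trans (htkle (k+1) hk)⟩
      rw [Real.norm_eq_abs]
      exact hψbdd n u h1
    have hcross : ∀ k : ℕ, k + 1 ≤ n →
        ∫ s in tk k..tk (k+1), psifun α S Z g t n s
          = A^(n-1-k) * (2 * ⟪S (max Δ 0) (Z (tk k)), Ik k⟫) := by
      intro k hk
      have hII := hIIg (tk (k+1)) (tk k) (tk (k+1)) (htknn k) (htkmono k)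
        ((htkle (k+1) hk).trans htT) (htknn (k+1)) ((htkle (k+1) hk).trans htT)
      have hcomm := (innerSL ℝ (S (max Δ 0) (Z (tk k)))).intervalIntegral_comp_comm hII
      have hcongr : ∫ s in tk k..tk (k+1), psifun α S Z g t n s
          = ∫ s in tk k..tk (k+1), (2 * A^(n-1-k)) *
            ⟪S (max Δ 0) (Z (tk k)), S (max (tk (k+1) - s) 0) (g s)⟫ := by
        apply intervalIntegral.integral_congr_ae
        have h1 : ∀ᵐ s : ℝ, s ≠ tk (k+1) := by
          rw [ae_iff]
          convert Real.volume_singleton (a := tk (k+1)) using 2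
          ext u; simp
        filter_upwards [h1] with u hne hmem
        rw [Set.uIoc_of_le (htkmono k)] at hmem
        have hu1 : tk k ≤ u := hmem.1.le
        have hu2 : u < tk (k+1) := lt_of_le_of_ne hmem.2 hne
        have hu0 : 0 ≤ u := (htknn k).trans hu1
        have hfl : ⌊u / Δ⌋₊ = k := by
          rw [Nat.floor_eq_iff (div_nonneg hu0 hΔpos.le)]
          constructor
          · rw [le_div_iff₀ hΔpos]
            exact hu1
          · rw [div_lt_iff₀ hΔpos]
            calc u < tk (k+1) := hu2
              _ = ((k:ℝ)+1) * Δ := by rw [htkd]; push_cast; ring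
        show psifun α S Z g t n u = _
        rw [psifun]
        rw [show t / (n:ℝ) = Δ from rfl, hfl]
        have harg : ((k:ℝ)+1) * Δ = tk (k+1) := by rw [htkd]; push_cast; ring
        rw [harg]
      rw [hcongr, intervalIntegral.integral_const_mul]
      have hval : ∫ s in tk k..tk (k+1),
          ⟪S (max Δ 0) (Z (tk k)), S (max (tk (k+1) - s) 0) (g s)⟫
          = ⟪S (max Δ 0) (Z (tk k)), Ik k⟫ := by
        simp only [hIkd]
        simpa using hcomm
      rw [hval]
      ring
    have hsum1 : ∑ j ∈ Finset.range n, A^(n-1-j) * (2 * ⟪S (max Δ 0) (Z (tk j)), Ik j⟫)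
        = ∫ s in (0:ℝ)..t, psifun α S Z g t n s := by
      have hadj := intervalIntegral.sum_integral_adjacent_intervals
        (a := tk) (f := psifun α S Z g t n) (μ := volume) hψint
      rw [htk0, htkn] at hadj
      rw [← hadj]
      apply Finset.sum_congr rfl
      intro j hj
      exact (hcross j (Finset.mem_range.mp hj)).symm
    have hsum2 : ∑ j ∈ Finset.range n, A^(n-1-j) * ‖Ik j‖^2
        ≤ E2 * (E * G)^2 * t^2 / n := by
      have hterm : ∀ j ∈ Finset.range n, A^(n-1-j) * ‖Ik j‖^2 ≤ E2 * (E*G*Δ)^2 := by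
        intro j hj
        have hj' := Finset.mem_range.mp hj
        have h1 := hAmb (n-1-j) (by omega)
        have h2 : ‖Ik j‖^2 ≤ (E*G*Δ)^2 :=
          pow_le_pow_left₀ (norm_nonneg _) (hIkb j hj') 2
        exact mul_le_mul h1 h2 (by positivity) hE2pos.le
      calc ∑ j ∈ Finset.range n, A^(n-1-j)*‖Ik j‖^2
          ≤ ∑ _j ∈ Finset.range n, E2*(E*G*Δ)^2 := Finset.sum_le_sum hterm
        _ = (n:ℝ) * (E2*(E*G*Δ)^2) := by
          rw [Finset.sum_const, Finset.card_range, nsmul_eq_mul]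
        _ = E2 * (E*G)^2 * t^2 / n := by
          rw [hΔ]; field_simp
    have hfin := htel n le_rfl
    rw [htkn] at hfin
    have hdsplit : ∑ j ∈ Finset.range n, A^(n-1-j) * d j
        = (∑ j ∈ Finset.range n, A^(n-1-j) * (2*⟪S (max Δ 0) (Z (tk j)), Ik j⟫))
          + ∑ j ∈ Finset.range n, A^(n-1-j) * ‖Ik j‖^2 := by
      rw [← Finset.sum_add_distrib]
      apply Finset.sum_congr rfl
      intro j _
      rw [hdd]
      ring
    rw [hdsplit, hsum1] at hfin
    linarith [hsum2]
  set L : ℝ → ℝ := fun s => 2 * Real.exp (2 * α * (t - s)) * ⟪Z s, g s⟫ with hLdef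
  have hψtendp : ∀ s ∈ Set.Ioo 0 t,
      Tendsto (fun n => psifun α S Z g t n s) atTop (nhds (L s)) := by
    intro s hs
    have hs0 : 0 ≤ s := hs.1.le
    have hsT : s ≤ T := hs.2.le.trans htT
    set kn : ℕ → ℕ := fun n => ⌊s / (t / n)⌋₊ with hkn
    set bn : ℕ → ℝ := fun n => ((kn n : ℝ) + 1) * (t / n) with hbn
    have hev : ∀ᶠ n : ℕ in atTop, 1 ≤ n := eventually_ge_atTop 1
    have hfacts : ∀ n : ℕ, 1 ≤ n →
        (kn n : ℝ) * (t/n) ≤ s ∧ s < bn n ∧ bn n ≤ t ∧ kn n + 1 ≤ n := by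
      intro n hn
      have hnR : (1:ℝ) ≤ (n:ℝ) := by exact_mod_cast hn
      have hnpos : (0:ℝ) < (n:ℝ) := by linarith
      have hΔpos : 0 < t/(n:ℝ) := div_pos ht0 hnpos
      have h1 : (kn n:ℝ) * (t/n) ≤ s := by
        rw [← le_div_iff₀ hΔpos]; exact Nat.floor_le (div_nonneg hs0 hΔpos.le)
      have h2 : s < bn n := by
        rw [hbn]; simp only
        rw [← div_lt_iff₀ hΔpos]
        exact_mod_cast Nat.lt_floor_add_one (s / (t/(n:ℝ)))
      have h4 : kn n + 1 ≤ n := by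
        have hlt : s / (t/(n:ℝ)) < (n:ℕ) := by
          rw [div_lt_iff₀ hΔpos]
          calc s < t := hs.2
            _ = (n:ℝ) * (t/(n:ℝ)) := by field_simp
        have hfl := (Nat.floor_lt (div_nonneg hs0 hΔpos.le)).mpr hlt
        rw [hkn]
        exact Nat.succ_le_of_lt hfl
      have h3 : bn n ≤ t := by
        rw [hbn]; simp only
        have hc : ((kn n:ℝ)+1) ≤ (n:ℝ) := by exact_mod_cast h4
        calc ((kn n:ℝ)+1) * (t/(n:ℝ)) ≤ (n:ℝ) * (t/(n:ℝ)) :=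
            mul_le_mul_of_nonneg_right hc hΔpos.le
          _ = t := by field_simp
      exact ⟨h1, h2, h3, h4⟩
    have hbtend : Tendsto bn atTop (nhds s) := by
      have hupper : Tendsto (fun n : ℕ => s + t/n) atTop (nhds s) := by
        have := (tendsto_const_div_atTop_nhds_zero_nat t).const_add s
        simpa using this
      apply tendsto_of_tendsto_of_tendsto_of_le_of_le'
        (tendsto_const_nhds (x := s)) hupper
      · filter_upwards [hev] with n hn; exact ((hfacts n hn).2.1).le
      · filter_upwards [hev] with n hn
        have h1 := (hfacts n hn).1
        have : bn n = (kn n:ℝ)*(t/n) + t/n := by rw [hbn]; ring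
        rw [this]
        linarith
    have hZb : Tendsto (fun n => Z (bn n)) atTop (nhds (Z s)) := by
      apply (hZrc s hs0).tendsto.comp
      rw [tendsto_nhdsWithin_iff]
      constructor
      · exact hbtend
      · filter_upwards [hev] with n hn
        exact Set.mem_Ici.mpr (hfacts n hn).2.1.le
    set In : ℕ → H := fun n =>
      ∫ u in ((kn n:ℝ)*(t/n))..(bn n), S (max (bn n - u) 0) (g u) with hInd
    have hInb : ∀ᶠ n in atTop, ‖In n‖ ≤ (E * G * t) / n := by
      filter_upwards [hev] with n hn
      obtain ⟨h1, h2, h3, h4⟩ := hfacts n hn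
      have hnR : (1:ℝ) ≤ (n:ℝ) := by exact_mod_cast hn
      have hnpos : (0:ℝ) < (n:ℝ) := by linarith
      have hΔpos : 0 < t/(n:ℝ) := div_pos ht0 hnpos
      have ha0 : 0 ≤ (kn n:ℝ)*(t/n) := by positivity
      have hab : (kn n:ℝ)*(t/n) ≤ bn n := le_trans h1 h2.le
      have hb2 : ∀ u ∈ Set.uIoc ((kn n:ℝ)*(t/(n:ℝ))) (bn n),
          ‖S (max (bn n - u) 0) (g u)‖ ≤ E * G := by
        intro u hu
        rw [Set.uIoc_of_le hab] at hu
        exact hSg_bound (bn n) u (le_trans ha0 hab) (h3.trans htT)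
          (le_trans ha0 hu.1.le) ((hu.2.trans h3).trans htT)
      have hbound := intervalIntegral.norm_integral_le_of_norm_le_const hb2
      have hd : |bn n - (kn n:ℝ)*(t/(n:ℝ))| = t/n := by
        have heq : bn n - (kn n:ℝ)*(t/(n:ℝ)) = t/n := by rw [hbn]; ring
        rw [heq, abs_of_pos hΔpos]
      rw [hd] at hbound
      calc ‖In n‖ ≤ E * G * (t/n) := hbound
        _ = (E * G * t) / n := by ring
    have hIn0 : Tendsto In atTop (nhds 0) :=
      squeeze_zero_norm' hInb (tendsto_const_div_atTop_nhds_zero_nat (E*G*t))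
    have hueq : ∀ᶠ n : ℕ in atTop,
        S (max (t/(n:ℝ)) 0) (Z ((kn n:ℝ)*(t/n))) = Z (bn n) - In n := by
      filter_upwards [hev] with n hn
      obtain ⟨h1, h2, h3, h4⟩ := hfacts n hn
      have ha0 : 0 ≤ (kn n:ℝ)*(t/n) := by positivity
      have hab : (kn n:ℝ)*(t/n) ≤ bn n := le_trans h1 h2.le
      have heq := hshift ((kn n:ℝ)*(t/n)) (bn n) ha0 hab (h3.trans htT)
      have hd : bn n - (kn n:ℝ)*(t/n) = t/n := by rw [hbn]; ring
      rw [hd] at heq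
      rw [heq, hInd]
      abel
    have hu : Tendsto (fun n : ℕ => S (max (t/(n:ℝ)) 0) (Z ((kn n:ℝ)*(t/n)))) atTop
        (nhds (Z s)) := by
      apply Tendsto.congr' (hueq.mono fun n h => h.symm)
      simpa using hZb.sub hIn0
    have hcS : Continuous fun u : ℝ => S (max u 0) (g s) :=
      hΦ.comp (continuous_id.prodMk continuous_const)
    have hv : Tendsto (fun n : ℕ => S (max (bn n - s) 0) (g s)) atTop (nhds (g s)) := by
      have h0 : S (max (0:ℝ) 0) (g s) = g s := by
        rw [max_self, hS0]; rfl
      have := (hcS.tendsto 0).comp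
        (by simpa using (hbtend.sub_const s) : Tendsto (fun n => bn n - s) atTop (nhds 0))
      rw [h0] at this
      exact this
    have hw : Tendsto (fun n : ℕ => Real.exp (2*α*(t/n)) ^ (n - 1 - kn n)) atTop
        (nhds (Real.exp (2*α*(t-s)))) := by
      have hweq : ∀ᶠ n in atTop,
          Real.exp (2*α*(t - bn n)) = Real.exp (2*α*(t/(n:ℝ))) ^ (n-1-kn n) := by
        filter_upwards [hev] with n hn
        obtain ⟨h1, h2, h3, h4⟩ := hfacts n hn
        have hnR : (1:ℝ) ≤ (n:ℝ) := by exact_mod_cast hn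
        have hnne : (n:ℝ) ≠ 0 := by positivity
        rw [← Real.exp_nat_mul]
        congr 1
        have hcast : ((n - 1 - kn n : ℕ):ℝ) = (n:ℝ) - 1 - (kn n:ℝ) := by
          rw [Nat.sub_sub, Nat.cast_sub (by omega : 1 + kn n ≤ n)]
          push_cast; ring
        rw [hcast, hbn]
        field_simp
        ring
      apply Tendsto.congr' hweq
      exact (Real.continuous_exp.tendsto _).comp
        ((hbtend.const_sub t).const_mul (2*α))
    have hfinal := ((tendsto_const_nhds (x := (2:ℝ))).mul hw).mul (hu.inner hv)
    exact hfinal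
  have hLmeas : Measurable L := by
    apply Measurable.mul
    · exact (Real.continuous_exp.measurable).comp
        ((measurable_const.sub measurable_id).const_mul _) |>.const_mul 2
    · exact hZmeas.inner hgmeas
  have hItend : Tendsto (fun n => ∫ s in (0:ℝ)..t, psifun α S Z g t n s) atTop
      (nhds (∫ s in (0:ℝ)..t, L s)) := by
    simp_rw [intervalIntegral.integral_of_le ht0']
    apply tendsto_integral_of_dominated_convergence (bound := fun _ => B)
    · intro n; exact (hψmeas n).aestronglyMeasurable.restrict
    · exact integrableOn_const measure_Ioc_lt_top.ne
    · intro n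
      refine (ae_restrict_iff' measurableSet_Ioc).mpr (Eventually.of_forall ?_)
      intro s hs
      rw [Real.norm_eq_abs]
      exact hψbdd n s hs
    · have h1 : ∀ᵐ s ∂(volume.restrict (Set.Ioc 0 t)), s ∈ Set.Ioc (0:ℝ) t :=
        ae_restrict_mem measurableSet_Ioc
      have h2 : ∀ᵐ s ∂(volume.restrict (Set.Ioc 0 t)), s ≠ t := by
        apply ae_restrict_of_ae
        rw [ae_iff]
        convert Real.volume_singleton (a := t) using 2
        ext s; simp
      filter_upwards [h1, h2] with s hs hst
      exact hψtendp s ⟨hs.1, lt_of_le_of_ne hs.2 hst⟩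
  have hlim : ‖Z t‖ ^ 2 ≤ ∫ s in (0:ℝ)..t, L s := by
    have hc : Tendsto (fun n : ℕ => E2 * (E * G) ^ 2 * t ^ 2 / n) atTop (nhds 0) :=
      tendsto_const_div_atTop_nhds_zero_nat _
    have := hItend.add hc
    rw [add_zero] at this
    exact ge_of_tendsto this (eventually_atTop.mpr ⟨1, hmain⟩)
  have hLle : ∫ s in (0:ℝ)..t, L s ≤ 2 * E2 * M' * ∫ s in (0:ℝ)..t, ‖Z s‖ ^ 2 := by
    have hwb : ∀ s : ℝ, 0 ≤ s → s ≤ t → Real.exp (2 * α * (t - s)) ≤ E2 := by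
      intro s h3 h5
      apply Real.exp_le_exp.mpr
      have h6 : t - s ≤ T := by linarith
      have h7 : 0 ≤ t - s := by linarith
      calc 2 * α * (t - s) ≤ |2 * α * (t - s)| := le_abs_self _
        _ = 2 * |α| * (t - s) := by
          rw [abs_mul, abs_mul, abs_of_nonneg h7, abs_of_nonneg (by norm_num : (0:ℝ) ≤ 2)]
        _ ≤ 2 * |α| * T := mul_le_mul_of_nonneg_left h6 (by positivity)
    have hmono : ∫ s in (0:ℝ)..t, L s ≤ ∫ s in (0:ℝ)..t, 2 * E2 * M' * ‖Z s‖ ^ 2 := by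
      apply intervalIntegral.integral_mono_on ht0'
      · apply II_of_bound hLmeas.aestronglyMeasurable (C := 2 * E2 * (KZ * G))
        intro s hs
        rw [Set.uIoc_of_le ht0'] at hs
        have h3 : 0 ≤ s := hs.1.le
        have h4 : s ≤ T := hs.2.trans htT
        have hw := hwb s h3 hs.2
        have hin : |⟪Z s, g s⟫| ≤ KZ * G := by
          refine (abs_real_inner_le_norm _ _).trans ?_
          exact mul_le_mul (hKZ s h3 h4) (hG s h3 h4) (norm_nonneg _) hKZ0
        have hexp_pos : 0 < Real.exp (2 * α * (t - s)) := Real.exp_pos _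
        show ‖2 * Real.exp (2 * α * (t - s)) * ⟪Z s, g s⟫‖ ≤ 2 * E2 * (KZ * G)
        rw [Real.norm_eq_abs, abs_mul, abs_mul,
          abs_of_nonneg (by norm_num : (0:ℝ) ≤ 2), abs_of_pos hexp_pos]
        have hinn : (0:ℝ) ≤ |⟪Z s, g s⟫| := abs_nonneg _
        nlinarith [mul_le_mul hw hin hinn hE2pos.le]
      · exact (hIIZsq 0 t le_rfl ht0' htT).const_mul _
      · intro s hs
        have h3 : 0 ≤ s := hs.1
        have h4 : s ≤ T := hs.2.trans htT
        have hw := hwb s h3 hs.2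
        have hin := hinner s h3 h4
        have hnn : 0 ≤ M' * ‖Z s‖ ^ 2 := by positivity
        have hexp_pos : 0 < Real.exp (2 * α * (t - s)) := Real.exp_pos _
        show 2 * Real.exp (2 * α * (t - s)) * ⟪Z s, g s⟫ ≤ 2 * E2 * M' * ‖Z s‖ ^ 2
        nlinarith [mul_le_mul_of_nonneg_left hin hexp_pos.le,
          mul_le_mul_of_nonneg_right hw hnn]
    calc ∫ s in (0:ℝ)..t, L s ≤ ∫ s in (0:ℝ)..t, 2 * E2 * M' * ‖Z s‖ ^ 2 := hmono
      _ = 2 * E2 * M' * ∫ s in (0:ℝ)..t, ‖Z s‖ ^ 2 :=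
        intervalIntegral.integral_const_mul _ _
  exact hlim.trans hLle
end


set_option maxHeartbeats 2000000 in
/-- Uniqueness of the càdlàg solution of the deterministic semilinear equation
`U_t = S_t X₀ + ∫₀ᵗ S_{t-s} f(s, U_s) ds + V_t` with semimonotone, demicontinuous,
linearly growing drift `f` and càdlàg forcing term `V`. -/
theorem stmt_3 {H : Type*} [NormedAddCommGroup H] [InnerProductSpace ℝ H]
    [CompleteSpace H] [SecondCountableTopology H] [MeasurableSpace H] [BorelSpace H]
    (α M D : ℝ) (S : ℝ → H →L[ℝ] H)
    (hS0 : S 0 = ContinuousLinearMap.id ℝ H)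
    (hSsem : ∀ s t : ℝ, 0 ≤ s → 0 ≤ t → S (s + t) = (S s).comp (S t))
    (hScont : ∀ x : H, ContinuousOn (fun t => S t x) (Set.Ici 0))
    (hSgrowth : ∀ t : ℝ, 0 ≤ t → ‖S t‖ ≤ Real.exp (α * t))
    (f : ℝ → H → H)
    (hfmeas : Measurable fun p : ℝ × H => f p.1 p.2)
    (hfdemi : ∀ t : ℝ, 0 ≤ t → ∀ (x : H) (u : ℕ → H),
      Tendsto u atTop (nhds x) →
      ∀ y : H, Tendsto (fun n => ⟪f t (u n), y⟫) atTop (nhds ⟪f t x, y⟫))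
    (hfmono : ∀ t : ℝ, 0 ≤ t → ∀ x y : H, ⟪f t x - f t y, x - y⟫ ≤ M * ‖x - y‖ ^ 2)
    (hfgrowth : ∀ t : ℝ, 0 ≤ t → ∀ x : H, ‖f t x‖ ^ 2 ≤ D * (1 + ‖x‖ ^ 2))
    (V : ℝ → H) (hV : IsCadlag V) (X₀ : H)
    (X Y : ℝ → H) (hXc : IsCadlag X) (hYc : IsCadlag Y)
    (hX : ∀ t : ℝ, 0 ≤ t →
      X t = S t X₀ + (∫ s in (0 : ℝ)..t, S (t - s) (f s (X s))) + V t)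
    (hY : ∀ t : ℝ, 0 ≤ t →
      Y t = S t X₀ + (∫ s in (0 : ℝ)..t, S (t - s) (f s (Y s))) + V t) :
    ∀ t : ℝ, 0 ≤ t → X t = Y t := by
  intro T hT0
  set X' : ℝ → H := fun s => X (max s 0) with hX'd
  set Y' : ℝ → H := fun s => Y (max s 0) with hY'd
  set Z : ℝ → H := fun s => X' s - Y' s with hZd
  set gX : ℝ → H := fun s => f (max s 0) (X' s) with hgXd
  set gY : ℝ → H := fun s => f (max s 0) (Y' s) with hgYd
  set g : ℝ → H := fun s => gX s - gY s with hgd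
  have hmX : Measurable X' := rc_measurable hXc.1
  have hmY : Measurable Y' := rc_measurable hYc.1
  have hmZ : Measurable Z := hmX.sub hmY
  have hmgX : Measurable gX :=
    hfmeas.comp ((measurable_id.max measurable_const).prodMk hmX)
  have hmgY : Measurable gY :=
    hfmeas.comp ((measurable_id.max measurable_const).prodMk hmY)
  have hmg : Measurable g := hmgX.sub hmgY
  obtain ⟨KX, hKX0, hKX⟩ := cadlag_bdd hXc T
  obtain ⟨KY, hKY0, hKY⟩ := cadlag_bdd hYc T
  set K : ℝ := max KX KY with hKd
  have hK0 : 0 ≤ K := le_trans hKX0 (le_max_left _ _)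
  have hD0 : 0 ≤ D := by
    have := hfgrowth 0 le_rfl 0
    simp at this
    nlinarith [sq_nonneg ‖f 0 (0:H)‖, norm_nonneg (f 0 (0:H))]
  set G1 : ℝ := Real.sqrt (D * (1 + K^2)) with hG1d
  have hG10 : 0 ≤ G1 := Real.sqrt_nonneg _
  have hfb : ∀ s : ℝ, 0 ≤ s → ∀ x : H, ‖x‖ ≤ K → ‖f s x‖ ≤ G1 := by
    intro s hs x hx
    have hxk : ‖x‖^2 ≤ K^2 := by nlinarith [norm_nonneg x]
    have h2 : ‖f s x‖^2 ≤ D*(1+K^2) :=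
      le_trans (hfgrowth s hs x)
        (by nlinarith [mul_le_mul_of_nonneg_left hxk hD0])
    calc ‖f s x‖ = Real.sqrt (‖f s x‖^2) := (Real.sqrt_sq (norm_nonneg _)).symm
      _ ≤ G1 := Real.sqrt_le_sqrt h2
  have hX'b : ∀ s : ℝ, 0 ≤ s → s ≤ T → ‖X' s‖ ≤ K := by
    intro s hs hsT
    simp only [hX'd]
    rw [max_eq_left hs]
    exact (hKX s hs hsT).trans (le_max_left _ _)
  have hY'b : ∀ s : ℝ, 0 ≤ s → s ≤ T → ‖Y' s‖ ≤ K := by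
    intro s hs hsT
    simp only [hY'd]
    rw [max_eq_left hs]
    exact (hKY s hs hsT).trans (le_max_right _ _)
  have hgXb : ∀ s : ℝ, 0 ≤ s → s ≤ T → ‖gX s‖ ≤ G1 := by
    intro s hs hsT
    simp only [hgXd]
    exact hfb (max s 0) (le_max_right _ _) _ (hX'b s hs hsT)
  have hgYb : ∀ s : ℝ, 0 ≤ s → s ≤ T → ‖gY s‖ ≤ G1 := by
    intro s hs hsT
    simp only [hgYd]
    exact hfb (max s 0) (le_max_right _ _) _ (hY'b s hs hsT)
  have hgb : ∀ s : ℝ, 0 ≤ s → s ≤ T → ‖g s‖ ≤ 2*G1 := by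
    intro s hs hsT
    simp only [hgd]
    calc ‖gX s - gY s‖ ≤ ‖gX s‖ + ‖gY s‖ := norm_sub_le _ _
      _ ≤ 2*G1 := by linarith [hgXb s hs hsT, hgYb s hs hsT]
  have hZb : ∀ s : ℝ, 0 ≤ s → s ≤ T → ‖Z s‖ ≤ 2*K := by
    intro s hs hsT
    simp only [hZd]
    calc ‖X' s - Y' s‖ ≤ ‖X' s‖ + ‖Y' s‖ := norm_sub_le _ _
      _ ≤ 2*K := by linarith [hX'b s hs hsT, hY'b s hs hsT]
  have hΦ : Continuous fun p : ℝ × H => S (max p.1 0) p.2 :=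
    Sp_cont α S hS0 hScont hSgrowth
  have hE' : ∀ c s : ℝ, |c - s| ≤ T → ‖S (max (c - s) 0)‖ ≤ Real.exp (|α| * T) := by
    intro c s h
    refine (Sp_norm_bound α S hS0 hSgrowth _).trans (Real.exp_le_exp.mpr ?_)
    exact mul_le_mul_of_nonneg_left h (abs_nonneg _)
  have habsT : ∀ c s : ℝ, 0 ≤ c → c ≤ T → 0 ≤ s → s ≤ T → |c - s| ≤ T := by
    intro c s h1 h2 h3 h4; rw [abs_le]; constructor <;> linarith
  -- integrability of primed integrands
  have hIIX : ∀ c a b : ℝ, 0 ≤ a → a ≤ b → b ≤ T → 0 ≤ c → c ≤ T →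
      IntervalIntegrable (fun s => S (max (c - s) 0) (gX s)) volume a b := by
    intro c a b h1 h2 h3 h4 h5
    apply II_of_bound (hΦ.measurable.comp
      ((measurable_const.sub measurable_id).prodMk hmgX)).aestronglyMeasurable
      (C := Real.exp (|α| * T) * G1)
    intro s hs
    rw [Set.uIoc_of_le h2] at hs
    have hs0 : 0 ≤ s := h1.trans hs.1.le
    have hsT : s ≤ T := hs.2.trans h3
    calc ‖S (max (c - s) 0) (gX s)‖ ≤ ‖S (max (c - s) 0)‖ * ‖gX s‖ :=
        ContinuousLinearMap.le_opNorm _ _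
      _ ≤ Real.exp (|α| * T) * G1 :=
        mul_le_mul (hE' c s (habsT c s h4 h5 hs0 hsT)) (hgXb s hs0 hsT)
          (norm_nonneg _) (Real.exp_pos _).le
  have hIIY : ∀ c a b : ℝ, 0 ≤ a → a ≤ b → b ≤ T → 0 ≤ c → c ≤ T →
      IntervalIntegrable (fun s => S (max (c - s) 0) (gY s)) volume a b := by
    intro c a b h1 h2 h3 h4 h5
    apply II_of_bound (hΦ.measurable.comp
      ((measurable_const.sub measurable_id).prodMk hmgY)).aestronglyMeasurable
      (C := Real.exp (|α| * T) * G1)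
    intro s hs
    rw [Set.uIoc_of_le h2] at hs
    have hs0 : 0 ≤ s := h1.trans hs.1.le
    have hsT : s ≤ T := hs.2.trans h3
    calc ‖S (max (c - s) 0) (gY s)‖ ≤ ‖S (max (c - s) 0)‖ * ‖gY s‖ :=
        ContinuousLinearMap.le_opNorm _ _
      _ ≤ Real.exp (|α| * T) * G1 :=
        mul_le_mul (hE' c s (habsT c s h4 h5 hs0 hsT)) (hgYb s hs0 hsT)
          (norm_nonneg _) (Real.exp_pos _).le
  have hIIg : ∀ c a b : ℝ, 0 ≤ a → a ≤ b → b ≤ T → 0 ≤ c → c ≤ T →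
      IntervalIntegrable (fun s => S (max (c - s) 0) (g s)) volume a b := by
    intro c a b h1 h2 h3 h4 h5
    have := (hIIX c a b h1 h2 h3 h4 h5).sub (hIIY c a b h1 h2 h3 h4 h5)
    apply this.congr
    intro s _
    simp only [hgd]
    rw [map_sub]
  -- mild equation for Z
  have hZeq : ∀ t : ℝ, 0 ≤ t → t ≤ T →
      Z t = ∫ s in (0:ℝ)..t, S (max (t - s) 0) (g s) := by
    intro t ht htT
    have hcX : (∫ s in (0:ℝ)..t, S (t-s) (f s (X s)))
        = ∫ s in (0:ℝ)..t, S (max (t-s) 0) (gX s) := by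
      apply intervalIntegral.integral_congr
      intro s hs
      rw [Set.uIcc_of_le ht] at hs
      simp only [hgXd, hX'd]
      rw [max_eq_left hs.1, max_eq_left (by linarith [hs.2] : (0:ℝ) ≤ t - s)]
    have hcY : (∫ s in (0:ℝ)..t, S (t-s) (f s (Y s)))
        = ∫ s in (0:ℝ)..t, S (max (t-s) 0) (gY s) := by
      apply intervalIntegral.integral_congr
      intro s hs
      rw [Set.uIcc_of_le ht] at hs
      simp only [hgYd, hY'd]
      rw [max_eq_left hs.1, max_eq_left (by linarith [hs.2] : (0:ℝ) ≤ t - s)]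
    have hXY : X t - Y t = (∫ s in (0:ℝ)..t, S (max (t-s) 0) (gX s))
        - ∫ s in (0:ℝ)..t, S (max (t-s) 0) (gY s) := by
      rw [← hcX, ← hcY, hX t ht, hY t ht]
      abel
    have hZt : Z t = X t - Y t := by
      simp only [hZd, hX'd, hY'd]
      rw [max_eq_left ht]
    rw [hZt, hXY,
      ← intervalIntegral.integral_sub (hIIX t 0 t le_rfl ht htT ht htT)
        (hIIY t 0 t le_rfl ht htT ht htT)]
    apply intervalIntegral.integral_congr
    intro s _
    simp only [hgd]
    rw [map_sub]
  have hZ0 : Z 0 = 0 := by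
    have := hZeq 0 le_rfl hT0
    simpa using this
  -- semigroup shift identity
  have hshift : ∀ a b : ℝ, 0 ≤ a → a ≤ b → b ≤ T →
      Z b = S (max (b - a) 0) (Z a) + ∫ s in a..b, S (max (b - s) 0) (g s) := by
    intro a b ha hab hbT
    have haT : a ≤ T := hab.trans hbT
    have hb0 : 0 ≤ b := ha.trans hab
    have hZbb := hZeq b hb0 hbT
    have hZaa := hZeq a ha haT
    have hIa : IntervalIntegrable (fun s => S (max (b-s) 0) (g s)) volume 0 a :=
      hIIg b 0 a le_rfl ha haT hb0 hbT
    have hIb : IntervalIntegrable (fun s => S (max (b-s) 0) (g s)) volume a b :=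
      hIIg b a b ha hab hbT hb0 hbT
    have hIa' : IntervalIntegrable (fun s => S (max (a-s) 0) (g s)) volume 0 a :=
      hIIg a 0 a le_rfl ha haT ha haT
    have hsplit : (∫ s in (0:ℝ)..b, S (max (b-s) 0) (g s))
        = (∫ s in (0:ℝ)..a, S (max (b-s) 0) (g s))
          + ∫ s in a..b, S (max (b-s) 0) (g s) :=
      (intervalIntegral.integral_add_adjacent_intervals hIa hIb).symm
    rw [hZbb, hsplit]
    congr 1
    rw [hZaa, ← ContinuousLinearMap.intervalIntegral_comp_comm _ hIa']
    apply intervalIntegral.integral_congr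
    intro s hs
    rw [Set.uIcc_of_le ha] at hs
    show S (max (b-s) 0) (g s) = S (max (b-a) 0) (S (max (a-s) 0) (g s))
    have h1 : max (b-a) 0 = b-a := max_eq_left (by linarith)
    have h2 : max (a-s) 0 = a-s := max_eq_left (by linarith [hs.2])
    have h3 : max (b-s) 0 = b-s := max_eq_left (by linarith [hs.2])
    rw [h1, h2, h3]
    have hsem := hSsem (b-a) (a-s) (by linarith) (by linarith [hs.2])
    rw [show b-a + (a-s) = b-s by ring] at hsem
    rw [hsem]
    rfl
  -- right continuity of Z
  have hZrc : ∀ s : ℝ, 0 ≤ s → ContinuousWithinAt Z (Set.Ici s) s := by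
    intro s hs
    have hX'c : ContinuousWithinAt X' (Set.Ici s) s := by
      apply (hXc.1 s hs).congr
      · intro u hu
        simp only [hX'd]
        rw [max_eq_left (hs.trans hu)]
      · simp only [hX'd]
        rw [max_eq_left hs]
    have hY'c : ContinuousWithinAt Y' (Set.Ici s) s := by
      apply (hYc.1 s hs).congr
      · intro u hu
        simp only [hY'd]
        rw [max_eq_left (hs.trans hu)]
      · simp only [hY'd]
        rw [max_eq_left hs]
    exact hX'c.sub hY'c
  -- semimonotonicity
  have hinner : ∀ s : ℝ, 0 ≤ s → s ≤ T → ⟪Z s, g s⟫ ≤ (max M 0) * ‖Z s‖^2 := by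
    intro s hs hsT
    have hZs : Z s = X s - Y s := by
      simp only [hZd, hX'd, hY'd]
      rw [max_eq_left hs]
    have hgs : g s = f s (X s) - f s (Y s) := by
      simp only [hgd, hgXd, hgYd, hX'd, hY'd]
      rw [max_eq_left hs]
    rw [hZs, hgs, real_inner_comm]
    calc ⟪f s (X s) - f s (Y s), X s - Y s⟫ ≤ M * ‖X s - Y s‖^2 := hfmono s hs _ _
      _ ≤ max M 0 * ‖X s - Y s‖^2 :=
        mul_le_mul_of_nonneg_right (le_max_left M 0) (by positivity)
  -- key inequality
  have hkey := key_ineq α T hT0 S hS0 hScont hSgrowth Z g hmZ hmg hZ0 hZrc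
    (2*K) (2*G1) (max M 0) (le_max_right M 0) hZb hgb hshift hinner
  -- Gronwall iteration
  have hiter := gronwall_iter (φ := fun s => ‖Z s‖^2) (T := T)
    (C := 2 * Real.exp (2 * |α| * T) * (max M 0)) (K2 := (2*K)^2)
    (by positivity) (by positivity) (hmZ.norm.pow_const 2)
    (fun s => by positivity)
    (fun s hs => pow_le_pow_left₀ (norm_nonneg _) (hZb s hs.1 hs.2) 2)
    (fun t ht => hkey t ht.1 ht.2)
  have hZT := hiter T ⟨hT0, le_rfl⟩
  have hZT0 : Z T = 0 := by
    have hsq : ‖Z T‖^2 = 0 := hZT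
    have h1 : ‖Z T‖ = 0 := by
      nlinarith [norm_nonneg (Z T), sq_nonneg ‖Z T‖]
    exact norm_eq_zero.mp h1
  have : X' T - Y' T = 0 := hZT0
  have hXY : X' T = Y' T := sub_eq_zero.mp this
  simp only [hX'd, hY'd] at hXY
  rw [max_eq_left hT0] at hXY
  exact hXY
end

section
/- Let H be a real separable Hilbert space, (S_t)_{t≥0} a C₀-semigroup on H of growth type α, T > 0, and f : [0,T] × H → H jointly measurable, demicontinuous in its second variable, and of linear growth with constant D. Let X_n, X : [0,T] → H be measurable functions such that X_n(s) → X(s) strongly in H for almost every s ∈ [0,T] and ∫₀ᵀ ‖X_n(s) − X(s)‖² ds → 0 as n → ∞. Then for every t ∈ [0,T], the Bochner integrals ∫₀ᵗ S_{t−s} f(s, X_n(s)) ds converge weakly in H to ∫₀ᵗ S_{t−s} f(s, X(s)) ds; that is, for every x ∈ H, ∫₀ᵗ ⟨x, S_{t−s}( f(s, X_n(s)) − f(s, X(s)) )⟩ ds → 0 as n → ∞. -/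
open scoped RealInnerProductSpace
open MeasureTheory Filter

lemma contPhi {H : Type*} [NormedAddCommGroup H] [InnerProductSpace ℝ H]
    (α : ℝ) (S : ℝ → H →L[ℝ] H)
    (hScont : ∀ x : H, ContinuousOn (fun t => S t x) (Set.Ici 0))
    (hSgrowth : ∀ t : ℝ, 0 ≤ t → ‖S t‖ ≤ Real.exp (α * t)) :
    Continuous fun p : ℝ × H => S (max p.1 0) p.2 := by
  have hc : ∀ v : H, Continuous fun r : ℝ => S (max r 0) v := fun v =>
    (hScont v).comp_continuous (continuous_id.max continuous_const) fun r => le_max_right r 0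
  have hb : ∀ r : ℝ, ‖S (max r 0)‖ ≤ Real.exp (|α| * |r|) := by
    intro r
    refine (hSgrowth _ (le_max_right _ _)).trans (Real.exp_le_exp.2 ?_)
    have h1 : max r 0 ≤ |r| := max_le (le_abs_self r) (abs_nonneg r)
    have h2 : (0:ℝ) ≤ max r 0 := le_max_right r 0
    calc α * max r 0 ≤ |α| * max r 0 := mul_le_mul_of_nonneg_right (le_abs_self α) h2
      _ ≤ |α| * |r| := mul_le_mul_of_nonneg_left h1 (abs_nonneg α)
  rw [continuous_iff_continuousAt]
  intro p
  rw [ContinuousAt, tendsto_iff_norm_sub_tendsto_zero]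
  have hbound : ∀ q : ℝ × H,
      ‖S (max q.1 0) q.2 - S (max p.1 0) p.2‖ ≤
        Real.exp (|α| * |q.1|) * ‖q.2 - p.2‖ + ‖S (max q.1 0) p.2 - S (max p.1 0) p.2‖ := by
    intro q
    have heq : S (max q.1 0) q.2 - S (max p.1 0) p.2
        = S (max q.1 0) (q.2 - p.2) + (S (max q.1 0) p.2 - S (max p.1 0) p.2) := by
      rw [map_sub]; abel
    rw [heq]
    refine (norm_add_le _ _).trans (add_le_add_left ?_ _)
    exact ((S (max q.1 0)).le_opNorm _).trans
      (mul_le_mul_of_nonneg_right (hb q.1) (norm_nonneg _))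
  refine squeeze_zero (fun q => norm_nonneg _) hbound ?_
  have h1 : Tendsto (fun q : ℝ × H => Real.exp (|α| * |q.1|) * ‖q.2 - p.2‖) (nhds p)
      (nhds (Real.exp (|α| * |p.1|) * 0)) := by
    refine Tendsto.mul ?_ ?_
    · exact (Real.continuous_exp.comp
        (continuous_const.mul (continuous_abs.comp continuous_fst))).continuousAt
    · have h : Tendsto (fun q : ℝ × H => q.2 - p.2) (nhds p) (nhds (p.2 - p.2)) :=
        (continuous_snd.sub continuous_const).continuousAt
      simpa using h.norm
  have h2 : Tendsto (fun q : ℝ × H => ‖S (max q.1 0) p.2 - S (max p.1 0) p.2‖) (nhds p)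
      (nhds 0) := by
    have h : Tendsto (fun q : ℝ × H => S (max q.1 0) p.2 - S (max p.1 0) p.2) (nhds p)
        (nhds (S (max p.1 0) p.2 - S (max p.1 0) p.2)) :=
      (((hc p.2).comp continuous_fst).sub continuous_const).continuousAt
    simpa using h.norm
  simpa using h1.add h2

lemma tendsto_of_eps_bound (b c : ℕ → ℝ) (M : ℝ) (hM : 0 ≤ M)
    (hb0 : ∀ n, 0 ≤ b n)
    (hbc : ∀ ε : ℝ, 0 < ε → ∀ n, b n ≤ ε * M + (1/ε) * c n)
    (hc : Tendsto c atTop (nhds 0)) : Tendsto b atTop (nhds 0) := by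
  rw [NormedAddCommGroup.tendsto_nhds_zero]
  intro ε hε
  set δ : ℝ := ε / (2 * (M + 1)) with hδdef
  have hδ : 0 < δ := by positivity
  have h1 : ∀ᶠ n in atTop, (1 / δ) * c n < ε / 2 := by
    have h := hc.const_mul (1 / δ)
    rw [mul_zero] at h
    exact h.eventually_lt_const (by positivity)
  filter_upwards [h1] with n hn
  have h2 := hbc δ hδ n
  rw [Real.norm_eq_abs, abs_of_nonneg (hb0 n)]
  have h3 : δ * M ≤ ε / 2 := by
    rw [hδdef, div_mul_eq_mul_div, div_le_div_iff₀ (by positivity) (by norm_num)]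
    nlinarith
  linarith

set_option maxHeartbeats 1000000 in
/-- Passage to the limit in the drift term: if `Xₙ → X` almost everywhere on `[0,T]` and
in `L²([0,T]; H)`, with `Xₙ, X` square integrable on `[0,T]` and `f` jointly measurable,
demicontinuous in its second variable and of linear growth, then for every `t ∈ [0,T]`
the Bochner integrals `∫₀ᵗ S_{t-s} f(s, Xₙ(s)) ds` converge weakly in `H` to
`∫₀ᵗ S_{t-s} f(s, X(s)) ds`. -/
theorem stmt_14 {H : Type*} [NormedAddCommGroup H] [InnerProductSpace ℝ H]
    [CompleteSpace H] [SecondCountableTopology H] [MeasurableSpace H] [BorelSpace H]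
    (α D T : ℝ) (hT : 0 < T)
    (S : ℝ → H →L[ℝ] H)
    (hS0 : S 0 = ContinuousLinearMap.id ℝ H)
    (hSsem : ∀ s t : ℝ, 0 ≤ s → 0 ≤ t → S (s + t) = (S s).comp (S t))
    (hScont : ∀ x : H, ContinuousOn (fun t => S t x) (Set.Ici 0))
    (hSgrowth : ∀ t : ℝ, 0 ≤ t → ‖S t‖ ≤ Real.exp (α * t))
    (f : ℝ → H → H)
    (hfmeas : Measurable fun p : ℝ × H => f p.1 p.2)
    (hfdemi : ∀ t ∈ Set.Icc (0 : ℝ) T, ∀ (x : H) (u : ℕ → H),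
      Tendsto u atTop (nhds x) →
      ∀ y : H, Tendsto (fun n => ⟪f t (u n), y⟫) atTop (nhds ⟪f t x, y⟫))
    (hfgrowth : ∀ t ∈ Set.Icc (0 : ℝ) T, ∀ x : H, ‖f t x‖ ^ 2 ≤ D * (1 + ‖x‖ ^ 2))
    (Xn : ℕ → ℝ → H) (X : ℝ → H)
    (hXnmeas : ∀ n : ℕ, Measurable (Xn n)) (hXmeas : Measurable X)
    (hXn2 : ∀ n : ℕ, IntegrableOn (fun s => ‖Xn n s‖ ^ 2) (Set.Icc (0 : ℝ) T))
    (hX2 : IntegrableOn (fun s => ‖X s‖ ^ 2) (Set.Icc (0 : ℝ) T))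
    (hae : ∀ᵐ s ∂(volume.restrict (Set.Icc (0 : ℝ) T)),
      Tendsto (fun n => Xn n s) atTop (nhds (X s)))
    (hL2 : Tendsto (fun n => ∫ s in (0 : ℝ)..T, ‖Xn n s - X s‖ ^ 2) atTop (nhds 0)) :
    ∀ t ∈ Set.Icc (0 : ℝ) T, ∀ x : H,
      Tendsto
        (fun n => ∫ s in (0 : ℝ)..t, ⟪x, S (t - s) (f s (Xn n s) - f s (X s))⟫)
        atTop (nhds 0) := by
  intro t ht x
  obtain ⟨ht0, htT⟩ := ht
  -- basic facts
  have hD0 : 0 ≤ D := by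
    have h := hfgrowth 0 ⟨le_rfl, hT.le⟩ 0
    simp at h
    nlinarith [sq_nonneg ‖f (0:ℝ) (0:H)‖]
  have hfn : ∀ s ∈ Set.Icc (0:ℝ) T, ∀ v : H, ‖f s v‖ ≤ Real.sqrt D * (1 + ‖v‖) := by
    intro s hs v
    calc ‖f s v‖ = Real.sqrt (‖f s v‖ ^ 2) := (Real.sqrt_sq (norm_nonneg _)).symm
      _ ≤ Real.sqrt ((Real.sqrt D * (1 + ‖v‖)) ^ 2) := by
          refine Real.sqrt_le_sqrt ?_
          rw [mul_pow, Real.sq_sqrt hD0]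
          nlinarith [hfgrowth s hs v, mul_nonneg hD0 (norm_nonneg v)]
      _ = Real.sqrt D * (1 + ‖v‖) := Real.sqrt_sq (by positivity)
  have hΦ : Continuous fun p : ℝ × H => S (max p.1 0) p.2 := contPhi α S hScont hSgrowth
  -- rewrite the interval integral as an integral over `Ioc 0 t`
  simp only [intervalIntegral.integral_of_le ht0]
  obtain ⟨μ, hμ⟩ : ∃ μ' : Measure ℝ, μ' = volume.restrict (Set.Ioc (0:ℝ) t) := ⟨_, rfl⟩
  rw [← hμ]
  haveI : IsFiniteMeasure μ := by
    constructor
    rw [hμ, Measure.restrict_apply_univ]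
    exact measure_Ioc_lt_top
  have hsub : Set.Ioc (0:ℝ) t ⊆ Set.Icc 0 T := fun s hs => ⟨hs.1.le, hs.2.trans htT⟩
  have hmem : ∀ᵐ s ∂μ, s ∈ Set.Ioc (0:ℝ) t := by
    rw [hμ]; exact ae_restrict_mem measurableSet_Ioc
  -- notation
  set K : ℝ := ‖x‖ * Real.exp (|α| * T) * Real.sqrt D with hKdef
  have hK0 : 0 ≤ K := by positivity
  set w : ℕ → ℝ → H := fun n s => f s (Xn n s) - f s (X s) with hw
  set g : ℕ → ℝ → ℝ := fun n s => ⟪x, S (t - s) (w n s)⟫ with hg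
  set A : ℝ → ℝ := fun s => K * (2 + 2 * ‖X s‖) with hA
  set B : ℕ → ℝ → ℝ := fun n s => K * ‖Xn n s - X s‖ with hB
  have hA0 : ∀ s, 0 ≤ A s := fun s => mul_nonneg hK0 (by positivity)
  have hB0 : ∀ n s, 0 ≤ B n s := fun n s => mul_nonneg hK0 (norm_nonneg _)
  -- measurability
  have hwmeas : ∀ n, Measurable (w n) := fun n =>
    (hfmeas.comp (measurable_id.prodMk (hXnmeas n))).sub
      (hfmeas.comp (measurable_id.prodMk hXmeas))
  have hinner : Continuous fun v : H => ⟪x, v⟫ := continuous_const.inner continuous_id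
  have hg'meas : ∀ n, Measurable fun s => ⟪x, S (max (t - s) 0) (w n s)⟫ := fun n =>
    (hinner.comp hΦ).measurable.comp
      ((measurable_const.sub measurable_id).prodMk (hwmeas n))
  have hgeq : ∀ n, g n =ᵐ[μ] fun s => ⟪x, S (max (t - s) 0) (w n s)⟫ := by
    intro n
    filter_upwards [hmem] with s hs
    rw [hg]
    simp only
    rw [max_eq_left (sub_nonneg.2 hs.2)]
  have hgaesm : ∀ n, AEStronglyMeasurable (g n) μ := fun n =>
    ((hg'meas n).aestronglyMeasurable).congr (hgeq n).symm
  -- integrability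
  have hX2' : Integrable (fun s => ‖X s‖ ^ 2) μ := by
    rw [hμ]; exact hX2.mono_set hsub
  have hXn2' : ∀ n, Integrable (fun s => ‖Xn n s‖ ^ 2) μ := fun n => by
    rw [hμ]; exact (hXn2 n).mono_set hsub
  have hXnorm : Integrable (fun s => ‖X s‖) μ := by
    refine Integrable.mono' ((integrable_const 1).add hX2')
      hXmeas.norm.aestronglyMeasurable ?_
    filter_upwards with s
    rw [Real.norm_eq_abs, abs_norm]
    simp only [Pi.add_apply]
    nlinarith [sq_nonneg (‖X s‖ - 1)]
  have hdiffnorm : ∀ n, Integrable (fun s => ‖Xn n s - X s‖) μ := by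
    intro n
    refine Integrable.mono' ((integrable_const 2).add ((hXn2' n).add hX2'))
      ((hXnmeas n).sub hXmeas).norm.aestronglyMeasurable ?_
    filter_upwards with s
    rw [Real.norm_eq_abs, abs_norm]
    simp only [Pi.add_apply]
    nlinarith [norm_sub_le (Xn n s) (X s), sq_nonneg (‖Xn n s‖ - 1), sq_nonneg (‖X s‖ - 1)]
  have hdiff2Icc : ∀ n, IntegrableOn (fun s => ‖Xn n s - X s‖ ^ 2) (Set.Icc (0:ℝ) T) := by
    intro n
    refine Integrable.mono' (((hXn2 n).add hX2).const_mul 2)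
      (((hXnmeas n).sub hXmeas).norm.pow_const 2).aestronglyMeasurable ?_
    filter_upwards with s
    rw [Real.norm_eq_abs, abs_of_nonneg (by positivity)]
    simp only [Pi.add_apply]
    have h1 : ‖Xn n s - X s‖ ^ 2 ≤ (‖Xn n s‖ + ‖X s‖) ^ 2 :=
      pow_le_pow_left₀ (norm_nonneg _) (norm_sub_le _ _) 2
    nlinarith [h1, sq_nonneg (‖Xn n s‖ - ‖X s‖)]
  have hdiff2 : ∀ n, Integrable (fun s => ‖Xn n s - X s‖ ^ 2) μ := fun n => by
    rw [hμ]; exact (hdiff2Icc n).mono_set hsub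
  have hAint : Integrable A μ := ((integrable_const 2).add (hXnorm.const_mul 2)).const_mul K
  have hBint : ∀ n, Integrable (B n) μ := fun n => (hdiffnorm n).const_mul K
  -- operator norm bound
  have hSop : ∀ s ∈ Set.Ioc (0:ℝ) t, ‖S (t - s)‖ ≤ Real.exp (|α| * T) := by
    intro s hs
    refine (hSgrowth (t - s) (sub_nonneg.2 hs.2)).trans (Real.exp_le_exp.2 ?_)
    have h1 : t - s ≤ T := by linarith [hs.1]
    have h2 : (0:ℝ) ≤ t - s := sub_nonneg.2 hs.2
    calc α * (t - s) ≤ |α| * (t - s) := mul_le_mul_of_nonneg_right (le_abs_self α) h2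
      _ ≤ |α| * T := mul_le_mul_of_nonneg_left h1 (abs_nonneg α)
  -- pointwise bound
  have hb : ∀ n, ∀ s ∈ Set.Ioc (0:ℝ) t, |g n s| ≤ A s + B n s := by
    intro n s hs
    have hsIcc : s ∈ Set.Icc (0:ℝ) T := hsub hs
    have h1 : |g n s| ≤ ‖x‖ * ‖S (t - s) (w n s)‖ := abs_real_inner_le_norm x _
    have h2 : ‖S (t - s) (w n s)‖ ≤ Real.exp (|α| * T) * ‖w n s‖ :=
      ((S (t - s)).le_opNorm _).trans
        (mul_le_mul_of_nonneg_right (hSop s hs) (norm_nonneg _))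
    have h3 : ‖w n s‖ ≤ Real.sqrt D * (1 + ‖Xn n s‖) + Real.sqrt D * (1 + ‖X s‖) :=
      (norm_sub_le _ _).trans (add_le_add (hfn s hsIcc _) (hfn s hsIcc _))
    have h4 : ‖Xn n s‖ ≤ ‖X s‖ + ‖Xn n s - X s‖ := by
      calc ‖Xn n s‖ = ‖X s + (Xn n s - X s)‖ := by rw [add_sub_cancel]
        _ ≤ ‖X s‖ + ‖Xn n s - X s‖ := norm_add_le _ _
    calc |g n s| ≤ ‖x‖ * ‖S (t - s) (w n s)‖ := h1
      _ ≤ ‖x‖ * (Real.exp (|α| * T) * ‖w n s‖) :=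
          mul_le_mul_of_nonneg_left h2 (norm_nonneg x)
      _ = (‖x‖ * Real.exp (|α| * T)) * ‖w n s‖ := by ring
      _ ≤ (‖x‖ * Real.exp (|α| * T)) *
            (Real.sqrt D * (2 + 2 * ‖X s‖ + ‖Xn n s - X s‖)) := by
          refine mul_le_mul_of_nonneg_left (h3.trans ?_) (by positivity)
          nlinarith [Real.sqrt_nonneg D, h4]
      _ = A s + B n s := by rw [hA, hB, hKdef]; ring
  have hgint : ∀ n, Integrable (g n) μ := by
    intro n
    refine Integrable.mono' (hAint.add (hBint n)) (hgaesm n) ?_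
    filter_upwards [hmem] with s hs
    rw [Real.norm_eq_abs]
    exact hb n s hs
  have hminaesm : ∀ n, AEStronglyMeasurable (fun s => min (|g n s|) (A s)) μ := by
    intro n
    have hAmeas : Measurable A := ((hXmeas.norm.const_mul 2).const_add 2).const_mul K
    have : Measurable fun s => min (|⟪x, S (max (t - s) 0) (w n s)⟫|) (A s) :=
      ((hg'meas n).abs).min hAmeas
    refine this.aestronglyMeasurable.congr ?_
    filter_upwards [hgeq n] with s hs
    rw [hs]
  have hminint : ∀ n, Integrable (fun s => min (|g n s|) (A s)) μ := by
    intro n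
    refine Integrable.mono' hAint (hminaesm n) ?_
    filter_upwards with s
    rw [Real.norm_eq_abs, abs_of_nonneg (le_min (abs_nonneg _) (hA0 s))]
    exact min_le_right _ _
  -- almost everywhere convergence of g n to 0
  have haeμ : ∀ᵐ s ∂μ, Tendsto (fun n => Xn n s) atTop (nhds (X s)) := by
    rw [hμ]; exact ae_restrict_of_ae_restrict_of_subset hsub hae
  have hg0 : ∀ᵐ s ∂μ, Tendsto (fun n => g n s) atTop (nhds 0) := by
    filter_upwards [haeμ, hmem] with s hsX hs
    set y : H := (ContinuousLinearMap.adjoint (S (t - s))) x with hy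
    have hrep : ∀ v : H, ⟪x, S (t - s) v⟫ = ⟪v, y⟫ := by
      intro v
      rw [hy, ContinuousLinearMap.adjoint_inner_right]
      exact real_inner_comm _ _
    have h := hfdemi s (hsub hs) (X s) (fun n => Xn n s) hsX y
    have heq : (fun n => g n s) = fun n => ⟪f s (Xn n s), y⟫ - ⟪f s (X s), y⟫ := by
      funext n
      rw [hg]
      simp only
      rw [hrep (w n s), hw]
      exact inner_sub_left _ _ _
    rw [heq]
    have h2 := h.sub_const (⟪f s (X s), y⟫)
    simpa using h2
  -- DCT for the min part
  have hI1 : Tendsto (fun n => ∫ s, min (|g n s|) (A s) ∂μ) atTop (nhds 0) := by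
    have h := tendsto_integral_of_dominated_convergence (μ := μ)
      (F := fun n s => min (|g n s|) (A s)) (f := fun _ => (0:ℝ)) A hminaesm hAint ?_ ?_
    · simpa using h
    · intro n
      filter_upwards with s
      rw [Real.norm_eq_abs, abs_of_nonneg (le_min (abs_nonneg _) (hA0 s))]
      exact min_le_right _ _
    · filter_upwards [hg0] with s hs
      have habs : Tendsto (fun n => |g n s|) atTop (nhds 0) := by simpa using hs.abs
      exact squeeze_zero (fun n => le_min (abs_nonneg _) (hA0 s))
        (fun n => min_le_left _ _) habs
  -- L¹ convergence of ‖Xn - X‖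
  have hIocT : ∀ n, ∫ s, ‖Xn n s - X s‖ ^ 2 ∂μ ≤ ∫ s in (0:ℝ)..T, ‖Xn n s - X s‖ ^ 2 := by
    intro n
    rw [intervalIntegral.integral_of_le hT.le, hμ]
    refine setIntegral_mono_set ((hdiff2Icc n).mono_set Set.Ioc_subset_Icc_self) ?_ ?_
    · filter_upwards with s using by positivity
    · exact HasSubset.Subset.eventuallyLE (Set.Ioc_subset_Ioc_right htT)
  have hL1 : Tendsto (fun n => ∫ s, ‖Xn n s - X s‖ ∂μ) atTop (nhds 0) := by
    refine tendsto_of_eps_bound _ (fun n => ∫ s in (0:ℝ)..T, ‖Xn n s - X s‖ ^ 2) T hT.le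
      (fun n => integral_nonneg fun s => norm_nonneg _) ?_ hL2
    intro ε hε n
    have hpt : ∀ s, ‖Xn n s - X s‖ ≤ ε + (1/ε) * ‖Xn n s - X s‖ ^ 2 := by
      intro s
      have key : ε * (1/ε * ‖Xn n s - X s‖ ^ 2) = ‖Xn n s - X s‖ ^ 2 := by
        field_simp
      nlinarith [sq_nonneg (ε - ‖Xn n s - X s‖), norm_nonneg (Xn n s - X s), hε]
    have hμT : (μ Set.univ).toReal ≤ T := by
      rw [hμ, Measure.restrict_apply_univ, Real.volume_Ioc,
        ENNReal.toReal_ofReal (by linarith)]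
      linarith
    calc ∫ s, ‖Xn n s - X s‖ ∂μ
        ≤ ∫ s, (ε + (1/ε) * ‖Xn n s - X s‖ ^ 2) ∂μ :=
          integral_mono (hdiffnorm n)
            ((integrable_const ε).add ((hdiff2 n).const_mul (1/ε))) hpt
      _ = (μ Set.univ).toReal * ε + (1/ε) * ∫ s, ‖Xn n s - X s‖ ^ 2 ∂μ := by
          rw [integral_add (integrable_const ε) ((hdiff2 n).const_mul (1/ε)),
            integral_const, integral_const_mul, smul_eq_mul, measureReal_def]
      _ ≤ ε * T + (1/ε) * ∫ s in (0:ℝ)..T, ‖Xn n s - X s‖ ^ 2 := by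
          have h1 := hIocT n
          have h2 : (0:ℝ) ≤ 1/ε := by positivity
          nlinarith [hμT, hε]
  have hI2 : Tendsto (fun n => ∫ s, B n s ∂μ) atTop (nhds 0) := by
    have heq : (fun n => ∫ s, B n s ∂μ) = fun n => K * ∫ s, ‖Xn n s - X s‖ ∂μ := by
      funext n
      rw [hB]
      exact integral_const_mul _ _
    rw [heq]
    simpa using hL1.const_mul K
  -- conclusion
  have hfin : ∀ n, ‖∫ s, g n s ∂μ‖ ≤
      (∫ s, min (|g n s|) (A s) ∂μ) + ∫ s, B n s ∂μ := by
    intro n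
    refine (norm_integral_le_integral_norm _).trans ?_
    rw [← integral_add (hminint n) (hBint n)]
    refine integral_mono_ae (hgint n).norm ((hminint n).add (hBint n)) ?_
    filter_upwards [hmem] with s hs
    rw [Real.norm_eq_abs]
    rcases le_total (|g n s|) (A s) with h | h
    · rw [min_eq_left h]
      linarith [hB0 n s]
    · rw [min_eq_right h]
      linarith [hb n s hs]
  exact squeeze_zero_norm hfin (by simpa using hI1.add hI2)
end
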